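/- arXiv:1003.2221 — 9 statements merged into one kernel-verified Lean document; each statement's English description precedes it below -/
import Mathlib

section
/- Suppose f : ℕ≥1 → ℂ is a multiplicative function, k is a natural number, and χ : ℕ≥1 → ℂ is a periodic multiplicative function that is not identically zero, such that f(n) = n^k · χ(n) for all sufficiently large n. Then f(n) = n^k · χ(n) for all n ≥ 1. -/
/-!
Fix `n ≥ 1`. If `m` is coprime to `n`, large, and `χ m ≠ 0`, then multiplicativity of `f` and
of `n ↦ n ^ k χ n` together with `f = n ^ k χ` at `m` and at `n * m` give
`f n · m ^ k χ m = n ^ k χ n · m ^ k χ m`, and the nonzero factor cancels. Such `m` exist: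
stripping from a point where `χ` is nonzero its prime powers shared with `n` keeps `χ` nonzero,
and adding multiples of `n` times the period then makes it as large as needed.
-/

theorem apply_add_mul_of_periodic_from_one {α : Type*} {χ : ℕ → α} {d : ℕ}
    (hχ : ∀ n, 1 ≤ n → χ (n + d) = χ n) (j : ℕ) {x : ℕ} (hx : 1 ≤ x) :
    χ (x + j * d) = χ x := by
  have hper : Function.Periodic (fun n => χ (n + 1)) d := fun n => by
    simpa only [Nat.add_right_comm] using hχ (n + 1) le_add_self
  have := hper.nat_mul j (x - 1)
  rwa [Nat.cast_id, Nat.add_right_comm, Nat.sub_add_cancel hx] at this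

/-- Unlike `ArithmeticFunction.IsMultiplicative`, this asks neither `f 0 = 0` nor `f 1 = 1`. -/
def IsMulOnCoprime {M : Type*} [Mul M] (f : ℕ → M) : Prop :=
  ∀ m n : ℕ, 0 < m → 0 < n → Nat.Coprime m n → f (m * n) = f m * f n

namespace IsMulOnCoprime

theorem exists_coprime_apply_ne_zero {M : Type*} [MulZeroClass M] {χ : ℕ → M}
    (hχ : IsMulOnCoprime χ) (n : ℕ) {m : ℕ} (hm : 0 < m) (hχm : χ m ≠ 0) :
    ∃ v, 0 < v ∧ v.Coprime n ∧ χ v ≠ 0 := by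
  induction m using Nat.strong_induction_on with
  | _ m ih =>
    by_cases hmn : m.Coprime n
    · exact ⟨m, hm, hmn, hχm⟩
    obtain ⟨p, hp, hpmn⟩ := Nat.exists_prime_and_dvd hmn
    have hpm : p ∣ m := hpmn.trans (Nat.gcd_dvd_left m n)
    have hsplit : χ m = χ (p ^ m.factorization p) * χ (ordCompl[p] m) := by
      conv_lhs => rw [← Nat.ordProj_mul_ordCompl_eq_self m p]
      exact hχ _ _ (pow_pos hp.pos _) (Nat.ordCompl_pos p hm.ne')
        ((Nat.coprime_ordCompl hp hm.ne').pow_left _)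
    have hlt : ordCompl[p] m < m :=
      Nat.div_lt_self hm <|
        Nat.one_lt_pow (hp.factorization_pos_of_dvd hm.ne' hpm).ne' hp.one_lt
    exact ih _ hlt (Nat.ordCompl_pos p hm.ne') (right_ne_zero_of_mul (hsplit ▸ hχm))

theorem pow_mul {R : Type*} [CommSemiring R] {χ : ℕ → R} (hχ : IsMulOnCoprime χ) (k : ℕ) :
    IsMulOnCoprime fun n => (n : R) ^ k * χ n := by
  intro m n hm hn hmn
  simp only [Nat.cast_mul, mul_pow, hχ m n hm hn hmn]
  ring

theorem eq_of_eq_at_mul {M : Type*} [Mul M] [Zero M] [IsRightCancelMulZero M]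
    {f g : ℕ → M} (hf : IsMulOnCoprime f) (hg : IsMulOnCoprime g) {n m : ℕ}
    (hn : 0 < n) (hm : 0 < m) (hnm : n.Coprime m) (hgm : g m ≠ 0)
    (hfm : f m = g m) (hfnm : f (n * m) = g (n * m)) : f n = g n :=
  mul_right_cancel₀ hgm <|
    calc f n * g m = f (n * m) := by rw [← hfm, hf n m hn hm hnm]
      _ = g n * g m := by rw [hfnm, hg n m hn hm hnm]

theorem exists_coprime_ge_apply_ne_zero {M : Type*} [MulZeroClass M]
    {χ : ℕ → M} (hχ : IsMulOnCoprime χ) {d : ℕ} (hd : 1 ≤ d)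
    (hper : ∀ n, 1 ≤ n → χ (n + d) = χ n) {m₀ : ℕ} (hm₀ : 0 < m₀) (hχm₀ : χ m₀ ≠ 0)
    {n : ℕ} (hn : 1 ≤ n) (N : ℕ) : ∃ m, N ≤ m ∧ m.Coprime n ∧ χ m ≠ 0 := by
  obtain ⟨v, hv, hvn, hχv⟩ := hχ.exists_coprime_apply_ne_zero n hm₀ hχm₀
  refine ⟨v + N * n * d, ?_, ?_, ?_⟩
  · exact le_add_left (by simpa using Nat.mul_le_mul (Nat.mul_le_mul_left N hn) hd)
  · simpa only [mul_right_comm N n d] using (Nat.coprime_add_mul_right_left v n (N * d)).mpr hvn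
  · rwa [apply_add_mul_of_periodic_from_one hper _ hv]

end IsMulOnCoprime

theorem eventually_eq_implies_eq_of_multiplicative_general
    (f : ℕ → ℂ) (k : ℕ) (χ : ℕ → ℂ)
    (hfmul : ∀ m n : ℕ, 0 < m → 0 < n → Nat.Coprime m n → f (m * n) = f m * f n)
    (hχmul : ∀ m n : ℕ, 0 < m → 0 < n → Nat.Coprime m n → χ (m * n) = χ m * χ n)
    (hχper : ∃ d : ℕ, 1 ≤ d ∧ ∀ n : ℕ, 1 ≤ n → χ (n + d) = χ n)
    (hχne : ∃ m : ℕ, 1 ≤ m ∧ χ m ≠ 0)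
    (hev : ∃ N : ℕ, ∀ n : ℕ, N ≤ n → f n = (n : ℂ) ^ k * χ n) :
    ∀ n : ℕ, 1 ≤ n → f n = (n : ℂ) ^ k * χ n := by
  intro n hn
  obtain ⟨d, hd, hper⟩ := hχper
  obtain ⟨m₀, hm₀, hχm₀⟩ := hχne
  obtain ⟨N, hN⟩ := hev
  obtain ⟨m, hNm, hmn, hχm⟩ :=
    IsMulOnCoprime.exists_coprime_ge_apply_ne_zero hχmul hd hper hm₀ hχm₀ hn (N + 1)
  have hm : 0 < m := by omega
  exact IsMulOnCoprime.eq_of_eq_at_mul hfmul (IsMulOnCoprime.pow_mul hχmul k) hn hm hmn.symm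
    (mul_ne_zero (pow_ne_zero k (Nat.cast_ne_zero.mpr hm.ne')) hχm) (hN m (by omega))
    (hN _ (by nlinarith))

/-- If `f : ℕ≥1 → ℂ` is multiplicative, `k : ℕ`, and `χ` is a periodic
multiplicative function, not identically zero, such that `f(n) = n^k χ(n)` for all
sufficiently large `n`, then `f(n) = n^k χ(n)` for all `n ≥ 1`. -/
theorem eventually_eq_implies_eq_of_multiplicative
    (f : ℕ → ℂ) (k : ℕ) (χ : ℕ → ℂ)
    (hf1 : f 1 = 1)
    (hfmul : ∀ m n : ℕ, 0 < m → 0 < n → Nat.Coprime m n → f (m * n) = f m * f n)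
    (hχ1 : χ 1 = 1)
    (hχmul : ∀ m n : ℕ, 0 < m → 0 < n → Nat.Coprime m n → χ (m * n) = χ m * χ n)
    (hχper : ∃ d : ℕ, 1 ≤ d ∧ ∀ n : ℕ, 1 ≤ n → χ (n + d) = χ n)
    (hχne : ∃ m : ℕ, 1 ≤ m ∧ χ m ≠ 0)
    (hev : ∃ N : ℕ, ∀ n : ℕ, N ≤ n → f n = (n : ℂ) ^ k * χ n) :
    ∀ n : ℕ, 1 ≤ n → f n = (n : ℂ) ^ k * χ n :=
  eventually_eq_implies_eq_of_multiplicative_general f k χ hfmul hχmul hχper hχne hev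
end

section
/- Let p be a prime and let F(z) = ∑_{n≥1} f(n) z^n ∈ ℚ[[z]] be algebraic over ℚ(z). If for every real ρ with 0 < ρ < 1 the sequence |f(n)|_p · ρ^n tends to 0 as n → ∞ (i.e., F converges p-adically on the open unit disk), then the sequence |f(n)|_p is uniformly bounded: there exists a constant C such that |f(n)|_p ≤ C for all n ≥ 1. -/
/-!
For `0 < ρ < 1` the `ρ`-Gauss norm `|G|_ρ = max_n |g(n)|_p ρ^n` of a power series whose terms
`|g(n)|_p ρ^n` tend to `0` is multiplicative: in the product, the coefficient at the sum of the first
indices where the two maxima are attained has a unique dominant term. In a relation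
`∑ P_i F^i = 0` the nonzero terms cannot have a unique largest Gauss norm, so
`|P_i|_ρ |F|_ρ^i = |P_j|_ρ |F|_ρ^j` for some `i < j`. For `1/2 ≤ ρ ≤ 1` the Gauss norms of the
nonzero `P_i` are bounded above and below independently of `ρ`, hence so is `|F|_ρ`, and letting
`ρ → 1` bounds `|f(n)|_p`.
-/

open Filter Topology Polynomial PowerSeries Finset.HasAntidiagonal

theorem Filter.Tendsto.exists_forall_ge_of_pos {t : ℕ → ℝ} (ht : Tendsto t atTop (𝓝 0))
    {n₀ : ℕ} (hn₀ : 0 < t n₀) : ∃ m, ∀ n, t n ≤ t m := by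
  obtain ⟨N, hN⟩ := eventually_atTop.1 (ht.eventually_lt_const hn₀)
  have hn₀N : n₀ ∈ Finset.range (N + n₀ + 1) := Finset.mem_range.2 (by omega)
  obtain ⟨m, -, hm⟩ := Finset.exists_max_image (Finset.range (N + n₀ + 1)) t ⟨n₀, hn₀N⟩
  refine ⟨m, fun n => ?_⟩
  by_cases hn : n < N + n₀ + 1
  · exact hm n (Finset.mem_range.2 hn)
  · exact (hN n (by omega)).le.trans (hm n₀ hn₀N)

theorem le_max_one_div_of_mul_pow_eq {A a b : ℝ} {i j : ℕ} (hij : i < j) (hA : 0 < A)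
    (hb : 0 < b) (h : a * A ^ i = b * A ^ j) : A ≤ max 1 (a / b) := by
  rcases le_or_gt A 1 with hA₁ | hA₁
  · exact le_max_of_le_left hA₁
  rw [← Nat.sub_add_cancel hij.le, pow_add] at h
  have hpow : A ^ (j - i) = a / b := by
    rw [eq_div_iff hb.ne']
    exact mul_right_cancel₀ (pow_pos hA i).ne' (by rw [h]; ring)
  exact le_max_of_le_right (hpow ▸ le_self_pow₀ hA₁.le (by omega))

theorem le_of_forall_mul_pow_le {x C ρ₀ : ℝ} (hρ₀ : ρ₀ < 1) (n : ℕ)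
    (h : ∀ ρ, ρ₀ < ρ → ρ < 1 → x * ρ ^ n ≤ C) : x ≤ C := by
  have hlim : Tendsto (fun ρ : ℝ => x * ρ ^ n) (𝓝[<] 1) (𝓝 x) := by
    refine (Continuous.tendsto' ?_ 1 x (by simp)).mono_left nhdsWithin_le_nhds
    fun_prop
  exact le_of_tendsto hlim (eventually_of_mem (Ioo_mem_nhdsLT hρ₀) fun ρ hρ => h ρ hρ.1 hρ.2)

theorem Rat.AbsoluteValue.isNonarchimedean_padic (p : ℕ) [Fact p.Prime] :
    IsNonarchimedean (Rat.AbsoluteValue.padic p) := fun x y => by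
  simpa using (show (padicNorm p (x + y) : ℝ) ≤ max (padicNorm p x : ℝ) (padicNorm p y) by
    exact_mod_cast padicNorm.nonarchimedean)

namespace PowerSeries

variable {R : Type*} [Ring R] (v : AbsoluteValue R ℝ) (ρ : ℝ)

structure IsGaussNormAt (G : R⟦X⟧) (A : ℝ) (m : ℕ) : Prop where
  le : ∀ n, v (coeff n G) * ρ ^ n ≤ A
  eq : v (coeff m G) * ρ ^ m = A
  lt : ∀ n < m, v (coeff n G) * ρ ^ n < A

variable {v ρ}

theorem isGaussNormAt_one [Nontrivial R] : IsGaussNormAt v ρ 1 1 0 where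
  le n := by rcases eq_or_ne n 0 with rfl | hn <;> simp [coeff_one, *]
  eq := by simp
  lt n hn := absurd hn n.not_lt_zero

theorem IsGaussNormAt.mul (hv : IsNonarchimedean v) (hρ : 0 < ρ) {G H : R⟦X⟧} {A B : ℝ}
    {m k : ℕ} (hG : IsGaussNormAt v ρ G A m) (hH : IsGaussNormAt v ρ H B k) (hA : 0 < A)
    (hB : 0 < B) : IsGaussNormAt v ρ (G * H) (A * B) (m + k) := by
  have weight_mul (ij : ℕ × ℕ) : v (coeff ij.1 G * coeff ij.2 H) * ρ ^ (ij.1 + ij.2) =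
      (v (coeff ij.1 G) * ρ ^ ij.1) * (v (coeff ij.2 H) * ρ ^ ij.2) := by
    rw [map_mul, pow_add]; ring
  have term_le (ij : ℕ × ℕ) : v (coeff ij.1 G * coeff ij.2 H) * ρ ^ (ij.1 + ij.2) ≤ A * B := by
    rw [weight_mul]
    exact mul_le_mul (hG.le _) (hH.le _) (by positivity) hA.le
  have term_lt (ij : ℕ × ℕ) (h : ij.1 < m ∨ ij.2 < k) :
      v (coeff ij.1 G * coeff ij.2 H) * ρ ^ (ij.1 + ij.2) < A * B := by
    rw [weight_mul]
    rcases h with h | h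
    · exact mul_lt_mul_of_lt_of_le_of_nonneg_of_pos (hG.lt _ h) (hH.le _) (by positivity) hB
    · exact mul_lt_mul_of_le_of_lt_of_nonneg_of_pos (hG.le _) (hH.lt _ h) (by positivity) hA
  have exists_term_ge (n : ℕ) : ∃ ij ∈ antidiagonal n,
      v (coeff n (G * H)) * ρ ^ n ≤ v (coeff ij.1 G * coeff ij.2 H) * ρ ^ (ij.1 + ij.2) := by
    obtain ⟨ij, hij, hle⟩ := hv.finset_image_add_of_nonempty
      (fun ij => coeff ij.1 G * coeff ij.2 H) (t := antidiagonal n) ⟨(n, 0), by simp⟩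
    refine ⟨ij, hij, ?_⟩
    rw [mem_antidiagonal.1 hij, coeff_mul]
    exact mul_le_mul_of_nonneg_right hle (by positivity)
  refine ⟨fun n => ?_, ?_, fun n hn => ?_⟩
  · obtain ⟨ij, -, hle⟩ := exists_term_ge n
    exact hle.trans (term_le ij)
  · have hmk : v (coeff m G * coeff k H) * ρ ^ (m + k) = A * B := by
      rw [← hG.eq, ← hH.eq]
      exact weight_mul (m, k)
    have hdom : v (coeff (m + k) (G * H)) = v (coeff m G * coeff k H) := by
      rw [coeff_mul]
      refine hv.apply_sum_eq_of_lt (fun _ => (v.map_neg _).symm) (k := (m, k))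
        (mem_antidiagonal.2 rfl) fun ij hij hne => ?_
      rw [mem_antidiagonal] at hij
      have hlt := term_lt ij (by by_contra! h; exact hne (Prod.ext (by omega) (by omega)))
      rw [hij, ← hmk] at hlt
      exact lt_of_mul_lt_mul_right hlt (by positivity)
    rw [hdom, hmk]
  · obtain ⟨ij, hij, hle⟩ := exists_term_ge n
    rw [mem_antidiagonal] at hij
    exact hle.trans_lt (term_lt ij (by omega))

theorem IsGaussNormAt.pow [Nontrivial R] (hv : IsNonarchimedean v) (hρ : 0 < ρ) {G : R⟦X⟧}
    {A : ℝ} {m : ℕ} (hG : IsGaussNormAt v ρ G A m) (hA : 0 < A) (i : ℕ) :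
    IsGaussNormAt v ρ (G ^ i) (A ^ i) (i * m) := by
  induction i with
  | zero => simpa using isGaussNormAt_one
  | succ i ih =>
    rw [pow_succ, pow_succ, add_one_mul]
    exact ih.mul hv hρ hG (pow_pos hA i) hA

theorem exists_isGaussNormAt (hρ : 0 < ρ) {G : R⟦X⟧} (hG : G ≠ 0)
    (hlim : Tendsto (fun n => v (coeff n G) * ρ ^ n) atTop (𝓝 0)) :
    ∃ A m, 0 < A ∧ IsGaussNormAt v ρ G A m := by
  classical
  obtain ⟨n₀, hn₀⟩ := exists_coeff_ne_zero_iff_ne_zero.2 hG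
  have hpos : 0 < v (coeff n₀ G) * ρ ^ n₀ := mul_pos (v.pos hn₀) (pow_pos hρ n₀)
  have hmax := hlim.exists_forall_ge_of_pos hpos
  refine ⟨_, Nat.find hmax, hpos.trans_le (Nat.find_spec hmax n₀),
    ⟨Nat.find_spec hmax, rfl, fun k hk => ?_⟩⟩
  obtain ⟨n, hn⟩ := not_forall.1 (Nat.find_min hmax hk)
  exact (not_le.1 hn).trans_le (Nat.find_spec hmax n)

theorem _root_.Polynomial.exists_isGaussNormAt (hρ : 0 < ρ) {Q : R[X]} (hQ : Q ≠ 0) :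
    ∃ A m, 0 < A ∧ IsGaussNormAt v ρ (Q : R⟦X⟧) A m := by
  refine PowerSeries.exists_isGaussNormAt hρ (coe_eq_zero_iff.not.2 hQ)
    (tendsto_const_nhds.congr' ?_)
  filter_upwards [eventually_gt_atTop Q.natDegree] with n hn
  simp [Polynomial.coeff_coe, Polynomial.coeff_eq_zero_of_natDegree_lt hn]

theorem IsGaussNormAt.le_sum_support {Q : R[X]} {A : ℝ} {m : ℕ}
    (hQ : IsGaussNormAt v ρ (Q : R⟦X⟧) A m) (hρ₀ : 0 ≤ ρ) (hρ₁ : ρ ≤ 1) :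
    A ≤ ∑ k ∈ Q.support, v (Q.coeff k) := by
  rw [← hQ.eq, Polynomial.coeff_coe]
  by_cases hm : Q.coeff m = 0
  · simpa [hm] using Finset.sum_nonneg fun k _ => v.nonneg (Q.coeff k)
  · exact (mul_le_of_le_one_right (v.nonneg _) (pow_le_one₀ hρ₀ hρ₁)).trans
      (Finset.single_le_sum (fun k _ => v.nonneg (Q.coeff k)) (Polynomial.mem_support_iff.2 hm))

theorem IsGaussNormAt.leadingCoeff_mul_pow_le {Q : R[X]} {A : ℝ} {m : ℕ}
    (hQ : IsGaussNormAt v ρ (Q : R⟦X⟧) A m) {ρ₀ : ℝ} (hρ₀ : 0 ≤ ρ₀) (hρ₀ρ : ρ₀ ≤ ρ) :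
    v Q.leadingCoeff * ρ₀ ^ Q.natDegree ≤ A := by
  have := hQ.le Q.natDegree
  rw [Polynomial.coeff_coe, ← Polynomial.leadingCoeff] at this
  exact le_trans (by gcongr) this

theorem exists_ne_eq_of_isGaussNormAt_of_sum_eq_zero (hv : IsNonarchimedean v) (hρ : 0 < ρ)
    {ι : Type*} {s : Finset ι} (hs : s.Nonempty) {G : ι → R⟦X⟧} {A : ι → ℝ} {m : ι → ℕ}
    (hG : ∀ i ∈ s, IsGaussNormAt v ρ (G i) (A i) (m i)) (hA : ∀ i ∈ s, 0 < A i)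
    (hsum : ∑ i ∈ s, G i = 0) : ∃ i ∈ s, ∃ j ∈ s, i ≠ j ∧ A i = A j := by
  by_contra! hne
  obtain ⟨i₀, hi₀, hmax⟩ := s.exists_max_image A hs
  have hdom : v (coeff (m i₀) (∑ i ∈ s, G i)) = v (coeff (m i₀) (G i₀)) := by
    rw [map_sum]
    refine hv.apply_sum_eq_of_lt (fun _ => (v.map_neg _).symm) hi₀ fun j hj hji => ?_
    refine lt_of_mul_lt_mul_right ?_ (pow_pos hρ (m i₀)).le
    rw [(hG i₀ hi₀).eq]
    exact ((hG j hj).le _).trans_lt ((hmax j hj).lt_of_ne (hne j hj i₀ hi₀ hji))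
  have h := (hG i₀ hi₀).eq
  rw [← hdom, hsum, map_zero, v.map_zero, zero_mul] at h
  exact (hA i₀ hi₀).ne h

theorem IsGaussNormAt.exists_le_of_sum_eq_zero [Nontrivial R] (hv : IsNonarchimedean v)
    {ρ₀ : ℝ} (hρ₀ : 0 < ρ₀) (hρ₀ρ : ρ₀ ≤ ρ) (hρ₁ : ρ ≤ 1) {F : R⟦X⟧} {A : ℝ} {m : ℕ}
    (hF : IsGaussNormAt v ρ F A m) (hA : 0 < A) {r : ℕ} {P : ℕ → R[X]} (hP : ∃ i ≤ r, P i ≠ 0)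
    (hrel : ∑ i ∈ Finset.range (r + 1), (P i : R⟦X⟧) * F ^ i = 0) :
    ∃ i ≤ r, ∃ j ≤ r, A ≤ max 1 ((∑ k ∈ (P i).support, v ((P i).coeff k)) /
      (v (P j).leadingCoeff * ρ₀ ^ (P j).natDegree)) := by
  classical
  have hρ : 0 < ρ := hρ₀.trans_le hρ₀ρ
  set s := (Finset.range (r + 1)).filter (P · ≠ 0)
  have hs : s.Nonempty := by
    obtain ⟨i, hi, hPi⟩ := hP
    exact ⟨i, Finset.mem_filter.2 ⟨Finset.mem_range.2 (by omega), hPi⟩⟩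
  have hnorm (i : ℕ) (hi : i ∈ s) : ∃ N k, 0 < N ∧ IsGaussNormAt v ρ (P i : R⟦X⟧) N k :=
    (P i).exists_isGaussNormAt hρ (Finset.mem_filter.1 hi).2
  choose! N k hN hPN using hnorm
  have hsum : ∑ i ∈ s, (P i : R⟦X⟧) * F ^ i = 0 := by
    rw [← hrel]
    exact Finset.sum_filter_of_ne fun i _ h hPi => h (by simp [hPi])
  obtain ⟨i, hi, j, hj, hij, heq⟩ := exists_ne_eq_of_isGaussNormAt_of_sum_eq_zero hv hρ hs
    (fun i hi => (hPN i hi).mul hv hρ (hF.pow hv hρ hA i) (hN i hi) (pow_pos hA i))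
    (fun i hi => mul_pos (hN i hi) (pow_pos hA i)) hsum
  wlog hlt : i < j generalizing i j
  · exact this j hj i hi hij.symm heq.symm (by omega)
  obtain ⟨hir, -⟩ := Finset.mem_filter.1 hi
  obtain ⟨hjr, hPj⟩ := Finset.mem_filter.1 hj
  refine ⟨i, by simpa [Nat.lt_succ_iff] using hir, j, by simpa [Nat.lt_succ_iff] using hjr, ?_⟩
  refine (le_max_one_div_of_mul_pow_eq hlt hA (hN j hj) heq).trans (max_le_max_left _ ?_)
  exact div_le_div₀ (Finset.sum_nonneg fun _ _ => v.nonneg _)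
    ((hPN i hi).le_sum_support hρ.le hρ₁)
    (mul_pos (v.pos (Polynomial.leadingCoeff_ne_zero.2 hPj)) (pow_pos hρ₀ _))
    ((hPN j hj).leadingCoeff_mul_pow_le hρ₀.le hρ₀ρ)

theorem exists_forall_isGaussNormAt_le_of_sum_eq_zero [Nontrivial R] (hv : IsNonarchimedean v)
    {ρ₀ : ℝ} (hρ₀ : 0 < ρ₀) {F : R⟦X⟧} {r : ℕ} {P : ℕ → R[X]} (hP : ∃ i ≤ r, P i ≠ 0)
    (hrel : ∑ i ∈ Finset.range (r + 1), (P i : R⟦X⟧) * F ^ i = 0) :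
    ∃ C, ∀ ρ A m, ρ₀ ≤ ρ → ρ ≤ 1 → 0 < A → IsGaussNormAt v ρ F A m → A ≤ C := by
  let B (ij : ℕ × ℕ) : ℝ := max 1 ((∑ k ∈ (P ij.1).support, v ((P ij.1).coeff k)) /
    (v (P ij.2).leadingCoeff * ρ₀ ^ (P ij.2).natDegree))
  refine ⟨∑ ij ∈ Finset.range (r + 1) ×ˢ Finset.range (r + 1), B ij,
    fun ρ A m hρ₀ρ hρ₁ hA hF => ?_⟩
  obtain ⟨i, hi, j, hj, hle⟩ := hF.exists_le_of_sum_eq_zero hv hρ₀ hρ₀ρ hρ₁ hA hP hrel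
  have hij : (i, j) ∈ Finset.range (r + 1) ×ˢ Finset.range (r + 1) :=
    Finset.mem_product.2 ⟨Finset.mem_range.2 (by omega), Finset.mem_range.2 (by omega)⟩
  exact hle.trans
    (Finset.single_le_sum (f := B) (fun _ _ => zero_le_one.trans (le_max_left _ _)) hij)

end PowerSeries

open Filter in
/-- Let `p` be prime and `F(z) = ∑_{n≥1} f(n) zⁿ ∈ ℚ[[z]]` algebraic over
`ℚ(z)`. If for every `0 < ρ < 1` the sequence `|f(n)|_p ρⁿ → 0`, then `|f(n)|_p` is
uniformly bounded. -/
theorem padic_bounded_of_algebraic_convergent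
    (p : ℕ) (hp : p.Prime)
    (f : ℕ → ℚ)
    (halg : ∃ (r : ℕ) (P : ℕ → Polynomial ℚ), (∃ i ≤ r, P i ≠ 0) ∧
      ∑ i ∈ Finset.range (r + 1),
        (P i : PowerSeries ℚ) * (PowerSeries.mk fun n => if n = 0 then 0 else f n) ^ i = 0)
    (hconv : ∀ ρ : ℝ, 0 < ρ → ρ < 1 →
      Tendsto (fun n : ℕ => (padicNorm p (f n) : ℝ) * ρ ^ n) atTop (nhds 0)) :
    ∃ C : ℝ, ∀ n : ℕ, 1 ≤ n → (padicNorm p (f n) : ℝ) ≤ C := by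
  have : Fact p.Prime := ⟨hp⟩
  obtain ⟨r, P, hP, hrel⟩ := halg
  set F : ℚ⟦X⟧ := PowerSeries.mk fun n => if n = 0 then 0 else f n
  have hcoeff (n : ℕ) (hn : 1 ≤ n) : coeff n F = f n := by simp [F, Nat.one_le_iff_ne_zero.1 hn]
  by_cases hF : F = 0
  · exact ⟨0, fun n hn => by simp [← hcoeff n hn, hF]⟩
  set v := Rat.AbsoluteValue.padic p
  have hv : IsNonarchimedean v := Rat.AbsoluteValue.isNonarchimedean_padic p
  obtain ⟨C, hC⟩ :=
    exists_forall_isGaussNormAt_le_of_sum_eq_zero hv (ρ₀ := 1 / 2) (by norm_num) hP hrel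
  refine ⟨C, fun n hn => le_of_forall_mul_pow_le (by norm_num : (1 / 2 : ℝ) < 1) n
    fun ρ hρ₀ hρ₁ => ?_⟩
  have hρ : 0 < ρ := by linarith
  have hlim : Tendsto (fun n => v (coeff n F) * ρ ^ n) atTop (𝓝 0) := by
    refine (hconv ρ hρ hρ₁).congr' ?_
    filter_upwards [eventually_ge_atTop 1] with k hk
    rw [hcoeff k hk]
    rfl
  obtain ⟨A, m, hA, hFA⟩ := exists_isGaussNormAt hρ hF hlim
  calc (padicNorm p (f n) : ℝ) * ρ ^ n = v (coeff n F) * ρ ^ n := by rw [hcoeff n hn]; rfl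
    _ ≤ A := hFA.le n
    _ ≤ C := hC ρ A m hρ₀.le hρ₁.le hA hFA
end

section
/- Let K be a field of characteristic 0 and let F(z) = ∑_{n≥1} f(n) z^n ∈ K[[z]] be D-finite over K(z). Then there exist a finitely generated ℚ-subalgebra R of K and a nonzero polynomial p ∈ R[x] with p(1), p(2), p(3), … all nonzero, such that for every n ≥ 1 the coefficient f(n) lies in the subring of K generated by R together with the inverses p(k)^{-1} for k ≥ 1. Moreover, if F is algebraic over K(z), then there exists a finitely generated ℚ-subalgebra T of K such that f(n) ∈ T for all n ≥ 1. -/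
/-!
Comparing coefficients in a linear differential equation `∑ pᵢ F⁽ⁱ⁾ = 0` shows that the
coefficients satisfy a recurrence `∑_{h ≤ L} Q_h(n) f(n + h) = 0` with polynomial coefficients
and `Q_L ≠ 0`. Once `n` exceeds the largest natural root of `Q_L`, this expresses `f(n + L)`
through earlier terms, the values `Q_h(n)` and `Q_L(n)⁻¹`; so everything lies in the ring
generated by finitely many coefficients, finitely many initial terms and the inverses of the
values of a shift of `Q_L`.

For algebraic `F`, take an annihilating polynomial `B` of minimal degree, so that
`H = B'(F) ≠ 0`; let `v` be its order. If `G = trunc N F` with `N > v`, Taylor expansion of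
`B` at `G` gives `B(G) + H · (F - G) ≡ 0 mod z^(N + v + 1)`, and comparing coefficients of
`z^(N + v)` yields `f(N) = -H_v⁻¹ [z^(N + v)] B(G)`, a polynomial expression in the
coefficients of `B`, the earlier `f(m)` and the single inverse `H_v⁻¹`.
-/

open Polynomial PowerSeries Finset

theorem Polynomial.eval_mem_of_coeff_mem {A S : Type*} [CommSemiring A] [SetLike S A]
    [SubsemiringClass S A] {s : S} {p : A[X]} {x : A} (hp : ∀ i, p.coeff i ∈ s) (hx : x ∈ s) :
    p.eval x ∈ s := by
  rw [eval_eq_sum_range]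
  exact sum_mem fun i _ => mul_mem (hp i) (pow_mem hx i)

theorem Polynomial.coeff_mem_of_coeffs_subset {A S : Type*} [Semiring A] [SetLike S A]
    [ZeroMemClass S A] {s : S} {p : A[X]} (hp : (p.coeffs : Set A) ⊆ s) (i : ℕ) :
    p.coeff i ∈ s := by
  by_cases h : p.coeff i = 0
  · exact h ▸ zero_mem s
  · exact hp (coeff_mem_coeffs h)

theorem Polynomial.exists_forall_ge_eval_natCast_ne_zero {R : Type*} [CommRing R] [IsDomain R]
    [CharZero R] {q : R[X]} (hq : q ≠ 0) : ∃ N : ℕ, ∀ n ≥ N, q.eval (n : R) ≠ 0 := by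
  obtain ⟨N, hN⟩ := ((finite_setOfPred_isRoot hq).preimage Nat.cast_injective.injOn).bddAbove
  exact ⟨N + 1, fun n hn h => by have := hN h; omega⟩

theorem PowerSeries.coeff_add_coe_mul {R : Type*} [CommSemiring R] {p : R[X]} {d : ℕ}
    (hp : p.natDegree ≤ d) (φ : R⟦X⟧) (b : ℕ) :
    coeff (b + d) ((p : R⟦X⟧) * φ) =
      ∑ j ∈ range (d + 1), p.coeff (d - j) * coeff (b + j) φ := by
  rw [coeff_mul,
    Nat.sum_antidiagonal_eq_sum_range_succ (fun i j => (p : R⟦X⟧).coeff i * coeff j φ),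
    ← sum_subset (range_subset_range.2 (by omega : d + 1 ≤ b + d + 1)), ← sum_range_reflect]
  · refine sum_congr rfl fun j hj => ?_
    rw [Nat.add_sub_cancel, Polynomial.coeff_coe, show b + d - (d - j) = b + j by
      have := mem_range.1 hj; omega]
  · intro j _ hj
    rw [Polynomial.coeff_coe, coeff_eq_zero_of_natDegree_lt (by simp at hj; omega), zero_mul]

section Recurrence

variable {R : Type*} [CommRing R]

/-- `Q h (n) = ∑_{i + j = h} (p i).coeff (d - j) * (n + j + 1) ⋯ (n + j + i)` is the factor of
`g (n + h)` in the coefficient of `X ^ (n + d)` of `∑ i ≤ s, p i * (d⁄dX)^[i] (mk g)`. -/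
noncomputable def recurrenceCoeff (p : ℕ → R[X]) (s d h : ℕ) : R[X] :=
  ∑ x ∈ range (s + 1) ×ˢ range (d + 1) with x.1 + x.2 = h,
    Polynomial.C ((p x.1).coeff (d - x.2)) * taylor ((x.2 + 1 : ℕ) : R) (ascPochhammer R x.1)

theorem coeff_add_sum_mul_iterate_derivative {p : ℕ → R[X]} {s d : ℕ}
    (hd : ∀ i ≤ s, (p i).natDegree ≤ d) (g : ℕ → R) (b : ℕ) :
    coeff (b + d) (∑ i ∈ range (s + 1), (p i : R⟦X⟧) * (d⁄dX R)^[i] (mk g)) =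
      ∑ h ∈ range (s + d + 1), (recurrenceCoeff p s d h).eval (b : R) * g (b + h) := by
  have hmaps : ∀ x ∈ range (s + 1) ×ˢ range (d + 1), x.1 + x.2 ∈ range (s + d + 1) := by
    intro x hx
    simp only [mem_product, mem_range] at hx ⊢
    omega
  calc coeff (b + d) (∑ i ∈ range (s + 1), (p i : R⟦X⟧) * (d⁄dX R)^[i] (mk g))
      = ∑ x ∈ range (s + 1) ×ˢ range (d + 1), (p x.1).coeff (d - x.2) *
          (ascPochhammer R x.1).eval ((b : R) + (x.2 + 1 : ℕ)) * g (b + (x.1 + x.2)) := by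
        rw [map_sum, sum_product]
        refine sum_congr rfl fun i hi => ?_
        rw [coeff_add_coe_mul (hd i (by simpa [Nat.lt_succ_iff] using hi))]
        refine sum_congr rfl fun j _ => ?_
        rw [PowerSeries.coeff_iterate_derivative, coeff_mk, ← Nat.cast_add,
          ascPochhammer_nat_eq_natCast_ascFactorial]
        ring_nf
    _ = ∑ h ∈ range (s + d + 1), ∑ x ∈ range (s + 1) ×ˢ range (d + 1) with x.1 + x.2 = h,
          (p x.1).coeff (d - x.2) * (ascPochhammer R x.1).eval ((b : R) + (x.2 + 1 : ℕ)) *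
            g (b + (x.1 + x.2)) := (sum_fiberwise_of_maps_to hmaps _).symm
    _ = _ := by
        refine sum_congr rfl fun h _ => ?_
        simp only [recurrenceCoeff, eval_finsetSum, sum_mul]
        refine sum_congr rfl fun x hx => ?_
        rw [(mem_filter.1 hx).2, eval_mul, eval_C, taylor_eval]

theorem exists_recurrenceCoeff_ne_zero [IsDomain R] {p : ℕ → R[X]} {s d : ℕ}
    (hp : ∃ i ≤ s, p i ≠ 0) (hd : ∀ i ≤ s, (p i).natDegree ≤ d) :
    ∃ h ≤ s + d, recurrenceCoeff p s d h ≠ 0 := by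
  classical
  -- with `i₀` the top order and `p i₀` of degree `d - j₀`, only `(i₀, j₀)` contributes to the
  -- coefficient of `X ^ i₀` in `recurrenceCoeff p s d (i₀ + j₀)`
  set I := (range (s + 1)).filter (p · ≠ 0)
  have hI : I.Nonempty := by
    obtain ⟨i, hi, hpi⟩ := hp
    exact ⟨i, mem_filter.2 ⟨mem_range.2 (by omega), hpi⟩⟩
  set i₀ := I.max' hI
  obtain ⟨hi₀s, hpi₀⟩ := mem_filter.1 (I.max'_mem hI)
  rw [mem_range] at hi₀s
  have htop (i : ℕ) (hi : i ≤ s) (hlt : i₀ < i) : p i = 0 := by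
    by_contra hpi
    exact (I.le_max' i (mem_filter.2 ⟨mem_range.2 (by omega), hpi⟩)).not_gt hlt
  set j₀ := d - (p i₀).natDegree
  have hdeg := hd i₀ (by omega)
  refine ⟨i₀ + j₀, by omega, fun hQ => leadingCoeff_ne_zero.2 hpi₀ ?_⟩
  have hcoeff := congrArg (Polynomial.coeff · i₀) hQ
  simp only [recurrenceCoeff, finsetSum_coeff, Polynomial.coeff_C_mul, Polynomial.coeff_zero]
    at hcoeff
  have hmonic : (taylor ((j₀ + 1 : ℕ) : R) (ascPochhammer R i₀)).coeff i₀ = 1 := by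
    have h := (monic_ascPochhammer R i₀).leadingCoeff
    rwa [← leadingCoeff_taylor (r := ((j₀ + 1 : ℕ) : R)), leadingCoeff, natDegree_taylor,
      ascPochhammer_natDegree] at h
  rwa [sum_eq_single (i₀, j₀), show d - j₀ = (p i₀).natDegree by omega, hmonic, mul_one]
    at hcoeff
  · intro x hx hne
    obtain ⟨hx, hsum⟩ := mem_filter.1 hx
    simp only [mem_product, mem_range] at hx
    rcases lt_or_gt_of_ne (show x.1 ≠ i₀ by rintro h; exact hne (Prod.ext h (by omega)))
      with hlt | hgt
    · rw [coeff_eq_zero_of_natDegree_lt (p := taylor _ (ascPochhammer R x.1))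
        (by rwa [natDegree_taylor, ascPochhammer_natDegree]), mul_zero]
    · rw [htop x.1 (by omega) hgt, Polynomial.coeff_zero, zero_mul]
  · intro h
    exact (h (mem_filter.2
      ⟨mem_product.2 ⟨mem_range.2 hi₀s, mem_range.2 (by omega)⟩, rfl⟩)).elim

theorem exists_recurrence_leading_ne_zero {g : ℕ → R} {L : ℕ} {Q : ℕ → R[X]}
    (hQ : ∃ h ≤ L, Q h ≠ 0)
    (hrec : ∀ n : ℕ, ∑ h ∈ range (L + 1), (Q h).eval (n : R) * g (n + h) = 0) :
    ∃ L', Q L' ≠ 0 ∧ ∀ n : ℕ, ∑ h ∈ range (L' + 1), (Q h).eval (n : R) * g (n + h) = 0 := by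
  classical
  set H := (range (L + 1)).filter (Q · ≠ 0)
  have hH : H.Nonempty := by
    obtain ⟨h, hh, hQh⟩ := hQ
    exact ⟨h, mem_filter.2 ⟨mem_range.2 (by omega), hQh⟩⟩
  obtain ⟨hL', hQL'⟩ := mem_filter.1 (H.max'_mem hH)
  refine ⟨H.max' hH, hQL', fun n => ?_⟩
  rw [← hrec n]
  refine sum_subset (range_subset_range.2 (mem_range.1 hL')) fun h hh hh' => ?_
  have hQh : Q h = 0 := by
    by_contra hQh
    exact hh' (mem_range.2 (Nat.lt_succ_of_le (H.le_max' h (mem_filter.2 ⟨hh, hQh⟩))))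
  rw [hQh, eval_zero, zero_mul]

theorem exists_recurrence_of_sum_mul_iterate_derivative_eq_zero [IsDomain R] {g : ℕ → R}
    {s : ℕ} {p : ℕ → R[X]} (hp : ∃ i ≤ s, p i ≠ 0)
    (hode : ∑ i ∈ range (s + 1), (p i : R⟦X⟧) * (d⁄dX R)^[i] (mk g) = 0) :
    ∃ (L : ℕ) (Q : ℕ → R[X]), Q L ≠ 0 ∧
      ∀ n : ℕ, ∑ h ∈ range (L + 1), (Q h).eval (n : R) * g (n + h) = 0 := by
  set d := (range (s + 1)).sup fun i => (p i).natDegree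
  have hd (i : ℕ) (hi : i ≤ s) : (p i).natDegree ≤ d :=
    le_sup (f := fun i => (p i).natDegree) (mem_range.2 (by omega))
  obtain ⟨L, hL, hrec⟩ := exists_recurrence_leading_ne_zero (g := g)
    (exists_recurrenceCoeff_ne_zero hp hd) fun n => by
      rw [← coeff_add_sum_mul_iterate_derivative hd, hode, map_zero]
  exact ⟨L, _, hL, hrec⟩

end Recurrence

theorem mem_of_recurrence {K : Type*} [Field K] {S : Subring K} {g : ℕ → K} {L M : ℕ}
    {Q : ℕ → K[X]} (hrec : ∀ n : ℕ, ∑ h ∈ range (L + 1), (Q h).eval (n : K) * g (n + h) = 0)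
    (hQ : ∀ h < L, ∀ n : ℕ, (Q h).eval (n : K) ∈ S)
    (hlead : ∀ n ≥ M, (Q L).eval (n : K) ≠ 0 ∧ ((Q L).eval (n : K))⁻¹ ∈ S)
    (hinit : ∀ n < M + L, g n ∈ S) (n : ℕ) : g n ∈ S := by
  induction n using Nat.strong_induction_on with
  | _ n ih =>
    by_cases hn : n < M + L
    · exact hinit n hn
    obtain ⟨m, hm, rfl⟩ : ∃ m ≥ M, n = m + L := ⟨n - L, by omega, by omega⟩
    obtain ⟨hne, hinv⟩ := hlead m hm
    have hstep : g (m + L) = -(((Q L).eval (m : K))⁻¹ *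
        ∑ h ∈ range L, (Q h).eval (m : K) * g (m + h)) := by
      have hrec' := hrec m
      rw [sum_range_succ] at hrec'
      field_simp
      linear_combination hrec'
    rw [hstep]
    refine neg_mem (mul_mem hinv (sum_mem fun h hh => ?_))
    rw [mem_range] at hh
    exact mul_mem (hQ h hh m) (ih _ (by omega))

theorem exists_fg_mem_closure_of_recurrence {K : Type*} [Field K] [CharZero K] {g : ℕ → K}
    {L : ℕ} {Q : ℕ → K[X]} (hQL : Q L ≠ 0)
    (hrec : ∀ n : ℕ, ∑ h ∈ range (L + 1), (Q h).eval (n : K) * g (n + h) = 0) :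
    ∃ (R : Subalgebra ℚ K) (q : K[X]), R.FG ∧ q ≠ 0 ∧ (∀ i, q.coeff i ∈ R) ∧
      (∀ k : ℕ, 1 ≤ k → q.eval (k : K) ≠ 0) ∧
      ∀ n, g n ∈
        Subring.closure ((R : Set K) ∪ {y | ∃ k : ℕ, 1 ≤ k ∧ y = (q.eval (k : K))⁻¹}) := by
  classical
  obtain ⟨N, hN⟩ := exists_forall_ge_eval_natCast_ne_zero hQL
  set q := taylor (N : K) (Q L)
  have hq (k : ℕ) : q.eval (k : K) = (Q L).eval ((k + N : ℕ) : K) := by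
    rw [taylor_eval, Nat.cast_add]
  set R := Algebra.adjoin ℚ (((range (L + 1)).biUnion (fun h => (Q h).coeffs) ∪ q.coeffs ∪
    (range (N + 1 + L)).image g : Finset K) : Set K)
  have hqR : ∀ i, q.coeff i ∈ R := coeff_mem_of_coeffs_subset fun a ha =>
    Algebra.subset_adjoin (mem_union_left _ (mem_union_right _ ha))
  refine ⟨R, q, Subalgebra.fg_adjoin_finset _, (taylor_eq_zero _ _).not.2 hQL, hqR,
    fun k hk => hq k ▸ hN _ (by omega), mem_of_recurrence (M := N + 1) hrec ?_ ?_ ?_⟩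
  · refine fun h hh n => Subring.subset_closure (Or.inl ?_)
    refine eval_mem_of_coeff_mem (coeff_mem_of_coeffs_subset fun a ha => ?_) (natCast_mem R n)
    exact Algebra.subset_adjoin
      (mem_union_left _ (mem_union_left _ (mem_biUnion.2 ⟨h, mem_range.2 (by omega), ha⟩)))
  · intro n hn
    obtain ⟨k, rfl⟩ : ∃ k, n = k + N := ⟨n - N, by omega⟩
    exact ⟨hN _ (by omega), Subring.subset_closure (Or.inr ⟨k, by omega, by rw [hq]⟩)⟩
  · exact fun n hn => Subring.subset_closure (Or.inl (Algebra.subset_adjoin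
      (mem_union_right _ (mem_image_of_mem g (mem_range.2 hn)))))

theorem IsAlgebraic.exists_aeval_eq_zero_aeval_derivative_ne_zero {R S : Type*} [CommRing R]
    [IsDomain R] [CharZero R] [CommRing S] [Algebra R S]
    (hinj : Function.Injective (algebraMap R S)) {x : S} (hx : IsAlgebraic R x) :
    ∃ B : R[X], aeval x B = 0 ∧ aeval x (derivative B) ≠ 0 := by
  classical
  have hdeg : ∃ d, ∃ B : R[X], B ≠ 0 ∧ aeval x B = 0 ∧ B.natDegree = d := by
    obtain ⟨B, hB0, hBx⟩ := hx
    exact ⟨_, B, hB0, hBx, rfl⟩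
  obtain ⟨B, hB0, hBx, hBd⟩ := Nat.find_spec hdeg
  refine ⟨B, hBx, fun hB'x => ?_⟩
  have hB' : derivative B ≠ 0 := by
    intro h
    rw [eq_C_of_derivative_eq_zero h, aeval_C, map_eq_zero_iff _ hinj] at hBx
    exact hB0 (by rw [eq_C_of_derivative_eq_zero h, hBx, map_zero])
  refine Nat.find_min hdeg ?_ ⟨derivative B, hB', hB'x, rfl⟩
  exact hBd ▸ natDegree_derivative_lt (derivative_ne_zero.1 hB')

theorem PowerSeries.coeff_eval_trunc_add_mul_coeff_eq_zero {A : Type*} [CommRing A]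
    {P : A⟦X⟧[X]} {G H : A⟦X⟧} {v N : ℕ} (hvN : v < N) (hP : P.eval G = 0)
    (hP' : P.derivative.eval G = X ^ v * H) :
    coeff (N + v) (P.eval (trunc N G : A⟦X⟧)) + constantCoeff H * coeff N G = 0 := by
  set E : A⟦X⟧ := mk fun i => coeff (i + N) G
  have hG : G = (trunc N G : A⟦X⟧) + X ^ N * E := by
    rw [add_comm]; exact eq_X_pow_mul_shift_add_trunc N G
  obtain ⟨k, hk⟩ := binomExpansion P (trunc N G : A⟦X⟧) (X ^ N * E)
  obtain ⟨W, hW⟩ := sub_dvd_eval_sub (trunc N G : A⟦X⟧) G P.derivative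
  rw [← hG, hP] at hk
  rw [hP'] at hW
  -- the error term is divisible by `X ^ (2 * N)`, and `N + v < 2 * N`
  have hX : (X : A⟦X⟧) ^ (N + N) = X ^ (N + v + 1) * X ^ (N - v - 1) := by
    rw [← pow_add]; congr 1; omega
  have key : P.eval (trunc N G : A⟦X⟧) + X ^ (N + v) * (H * E) =
      X ^ (N + v + 1) * (X ^ (N - v - 1) * (E * E * (W - k))) := by
    have hGt : (trunc N G : A⟦X⟧) - G = -(X ^ N * E) := by linear_combination -hG
    rw [hGt] at hW
    linear_combination (-1 : A⟦X⟧) * hk - (X ^ N * E) * hW + (E * E * (W - k)) * hX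
  have := congrArg (coeff (N + v)) key
  rwa [map_add, coeff_X_pow_mul', if_pos le_rfl, Nat.sub_self, coeff_zero_eq_constantCoeff,
    map_mul, coeff_X_pow_mul', if_neg (by omega), ← coeff_zero_eq_constantCoeff_apply E, coeff_mk,
    zero_add] at this

theorem Polynomial.coeff_eval_mem_of_coeff_mem {R A : Type*} [CommSemiring R] [CommSemiring A]
    [Algebra R A]
    {T : Subalgebra R A} {B : A[X][X]} {p : A[X]} (hB : ∀ i j, (B.coeff i).coeff j ∈ T)
    (hp : ∀ j, p.coeff j ∈ T)
    (j : ℕ) : (B.eval p).coeff j ∈ T := by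
  have hlifts (q : A[X]) : q ∈ lifts (algebraMap T A) ↔ ∀ i, q.coeff i ∈ T := by
    simp only [lifts_iff_coeff_lifts, Subalgebra.setRange_algebraMap, SetLike.mem_coe]
  exact (hlifts _).1 (eval_mem_of_coeff_mem (fun i => (hlifts _).2 (hB i)) ((hlifts _).2 hp)) j

theorem exists_fg_coeff_mem_of_aeval_eq_zero {K : Type*} [Field K] [CharZero K]
    {G : K⟦X⟧} {B : K[X][X]} (hB : aeval G B = 0) (hB' : aeval G (derivative B) ≠ 0) :
    ∃ T : Subalgebra ℚ K, T.FG ∧ ∀ n, coeff n G ∈ T := by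
  classical
  set H := aeval G (derivative B)
  set v := H.order.toNat
  set u := constantCoeff (divXPowOrder H)
  have hu : u ≠ 0 := constantCoeff_divXPowOrder_eq_zero_iff.not.2 hB'
  have hP : (B.map coeToPowerSeries.ringHom).eval G = 0 := by
    rwa [aeval_def, eval₂_eq_eval_map] at hB
  have hP' : (B.map coeToPowerSeries.ringHom).derivative.eval G =
      PowerSeries.X ^ v * divXPowOrder H := by
    rw [X_pow_order_mul_divXPowOrder, derivative_map, ← eval₂_eq_eval_map]; rfl
  have newton (N : ℕ) (hN : v < N) :
      coeff (N + v) ((B.eval (trunc N G) : K[X]) : K⟦X⟧) + u * coeff N G = 0 := by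
    rw [← coeToPowerSeries.ringHom_apply, ← eval₂_at_apply, ← eval_map]
    exact coeff_eval_trunc_add_mul_coeff_eq_zero hN hP hP'
  set gens : Finset K := B.coeffs.biUnion coeffs ∪ (range (v + 1)).image (coeff · G) ∪ {u⁻¹}
  set T := Algebra.adjoin ℚ (gens : Set K)
  have hBT (i j : ℕ) : (B.coeff i).coeff j ∈ T := by
    refine coeff_mem_of_coeffs_subset (fun a ha => Algebra.subset_adjoin ?_) j
    by_cases hi : B.coeff i = 0
    · simp [hi] at ha
    · exact mem_union_left _ (mem_union_left _ (mem_biUnion.2 ⟨_, coeff_mem_coeffs hi, ha⟩))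
  have huT : u⁻¹ ∈ T := Algebra.subset_adjoin (mem_union_right _ (mem_singleton_self _))
  refine ⟨T, Subalgebra.fg_adjoin_finset _, fun n => ?_⟩
  induction n using Nat.strong_induction_on with
  | _ n ih =>
    by_cases hn : n ≤ v
    · exact Algebra.subset_adjoin
        (mem_union_left _ (mem_union_right _ (mem_image_of_mem _ (mem_range.2 (by omega)))))
    · have hstep : coeff n G = -(u⁻¹ * coeff (n + v) (B.eval (trunc n G) : K[X])) := by
        have h := newton n (by omega)
        field_simp
        linear_combination h
      rw [hstep, Polynomial.coeff_coe]
      refine neg_mem (mul_mem huT (coeff_eval_mem_of_coeff_mem hBT (fun j => ?_) _))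
      rw [coeff_trunc]
      split_ifs with hj
      · exact ih j hj
      · exact zero_mem T

theorem isAlgebraic_of_sum_mul_pow_eq_zero {R A : Type*} [CommRing R] [CommRing A] [Algebra R A]
    {x : A} {r : ℕ} {P : ℕ → R} (hP : ∃ i ≤ r, P i ≠ 0)
    (h : ∑ i ∈ range (r + 1), algebraMap R A (P i) * x ^ i = 0) : IsAlgebraic R x := by
  refine ⟨∑ i ∈ range (r + 1), monomial i (P i), fun h0 => ?_, by simpa [aeval_monomial] using h⟩
  obtain ⟨i, hi, hPi⟩ := hP
  have hcoeff := congrArg (Polynomial.coeff · i) h0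
  simp [finsetSum_coeff, Polynomial.coeff_monomial, Nat.lt_succ_of_le hi] at hcoeff
  exact hPi hcoeff

/-- Lefschetz-style reduction: Let `K` be a field of characteristic 0 and
`F(z) = ∑_{n≥1} f(n) zⁿ ∈ K[[z]]` be D-finite over `K(z)`. Then there are a finitely
generated `ℚ`-subalgebra `R` of `K` and a nonzero polynomial `p` with coefficients in `R`
and `p(1), p(2), … ≠ 0` such that each `f(n)` (for `n ≥ 1`) lies in the subring of `K`
generated by `R` together with the inverses `p(k)⁻¹` for `k ≥ 1`. Moreover, if `F` is
algebraic over `K(z)`, then there is a finitely generated `ℚ`-subalgebra `T` of `K`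
containing every `f(n)` for `n ≥ 1`. -/
theorem dfinite_coefficients_in_localization
    (K : Type*) [Field K] [CharZero K] (f : ℕ → K)
    (hDF : ∃ (s : ℕ) (p : ℕ → Polynomial K), (∃ i ≤ s, p i ≠ 0) ∧
      ∑ i ∈ Finset.range (s + 1),
        (p i : PowerSeries K) *
          (⇑(PowerSeries.derivative (R := K)))^[i]
            (PowerSeries.mk fun n => if n = 0 then 0 else f n) = 0) :
    (∃ (R : Subalgebra ℚ K) (p : Polynomial K), R.FG ∧ p ≠ 0 ∧
      (∀ i : ℕ, p.coeff i ∈ R) ∧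
      (∀ k : ℕ, 1 ≤ k → p.eval (k : K) ≠ 0) ∧
      (∀ n : ℕ, 1 ≤ n → f n ∈
        Subring.closure ((R : Set K) ∪ {y : K | ∃ k : ℕ, 1 ≤ k ∧ y = (p.eval (k : K))⁻¹}))) ∧
    ((∃ (r : ℕ) (P : ℕ → Polynomial K), (∃ i ≤ r, P i ≠ 0) ∧
        ∑ i ∈ Finset.range (r + 1),
          (P i : PowerSeries K) *
            (PowerSeries.mk fun n => if n = 0 then 0 else f n) ^ i = 0) →
      ∃ T : Subalgebra ℚ K, T.FG ∧ ∀ n : ℕ, 1 ≤ n → f n ∈ T) := by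
  set g : ℕ → K := fun n => if n = 0 then 0 else f n
  have hgf (n : ℕ) (hn : 1 ≤ n) : g n = f n := if_neg (by omega)
  constructor
  · obtain ⟨s, p, hp, hode⟩ := hDF
    obtain ⟨L, Q, hQL, hrec⟩ := exists_recurrence_of_sum_mul_iterate_derivative_eq_zero hp hode
    obtain ⟨R, q, hR, hq, hqR, hqk, hgR⟩ := exists_fg_mem_closure_of_recurrence hQL hrec
    exact ⟨R, q, hR, hq, hqR, hqk, fun n hn => hgf n hn ▸ hgR n⟩
  · rintro ⟨r, P, hP, halg⟩
    have hG := isAlgebraic_of_sum_mul_pow_eq_zero hP halg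
    obtain ⟨B, hB, hB'⟩ :=
      hG.exists_aeval_eq_zero_aeval_derivative_ne_zero fun _ _ h => Polynomial.coe_inj.1 h
    obtain ⟨T, hT, hgT⟩ := exists_fg_coeff_mem_of_aeval_eq_zero hB hB'
    exact ⟨T, hT, fun n hn => hgf n hn ▸ by simpa using hgT n⟩
end

section
/- Let K be a finite extension of ℚ of degree d and let f : ℕ≥1 → K be a multiplicative function such that F(z) = ∑_{n≥1} f(n) z^n ∈ K[[z]] is the power series expansion of a rational function in K(z). Suppose F satisfies ∑_{i=0}^r P_i(z)·F(z)^i = 0 in K[[z]] with P_0, …, P_r ∈ K[z] and P_r ≠ 0. Then there exist polynomials A ∈ K[z] and B ∈ ℚ[z] with B ≠ 0 such that B(z)·F(z) = A(z) in K[[z]], every complex root of B is a root of unity, deg B ≤ d!·deg P_r, and deg A ≤ max_{0≤i≤r−1}(deg P_i) + (r·d! − 1)·deg P_r. -/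
/-!
Write `F = a / b` in lowest terms. Clearing denominators in `∑ Pᵢ Fⁱ = 0` gives
`∑ Pᵢ aⁱ bʳ⁻ⁱ = 0`, so, as in the rational root theorem, `b ∣ P_r` and `a ∣ P_j` for the least
`j < r` with `P_j ≠ 0`; this bounds `deg a` and `deg b`.

Since `b(0) ≠ 0` and `b` splits over an algebraic closure, the coefficients `f(n)` are eventually an
exponential polynomial `∑_β p_β(n) βⁿ`, and such a representation is unique. For a large prime `q`,
`f(q(1 + qt)) = f(q) f(1 + qt)` is an identity of exponential polynomials in `t` with bases
`β^(q²)` and `β^q`; comparing bases shows that every `a^(q²)` is some `b^q`, so the powers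
`a^(qʲ)` stay in a finite set and each base `a` is a root of unity. The roots of `b` are inverses
of bases, hence roots of unity too.

Finally the product of the `ℚ`-minimal polynomials of the roots of `b` is a multiple
`B ∈ ℚ[X]` of `b` with `deg B ≤ [K : ℚ] deg b`, and `A = a B / b`.
-/

open Polynomial Filter

namespace RationalMultiplicative

section Polynomials

noncomputable abbrev polySubring (R : Type*) [CommRing R] : Subring (PowerSeries R) :=
  (coeToPowerSeries.ringHom : R[X] →+* PowerSeries R).range

variable {R : Type*} [CommRing R]

theorem coe_mem_polySubring (a : R[X]) : (a : PowerSeries R) ∈ polySubring R :=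
  ⟨a, rfl⟩

theorem mem_polySubring_iff {G : PowerSeries R} :
    G ∈ polySubring R ↔ ∀ᶠ n in atTop, PowerSeries.coeff n G = 0 := by
  constructor
  · rintro ⟨a, rfl⟩
    filter_upwards [eventually_gt_atTop a.natDegree] with n hn
    rw [coeToPowerSeries.ringHom_apply, coeff_coe, coeff_eq_zero_of_natDegree_lt hn]
  · intro h
    obtain ⟨N, hN⟩ := eventually_atTop.1 h
    refine ⟨PowerSeries.trunc N G, PowerSeries.ext fun n => ?_⟩
    rw [coeToPowerSeries.ringHom_apply, coeff_coe, PowerSeries.coeff_trunc]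
    split_ifs with hn
    · rfl
    · exact (hN n (not_lt.1 hn)).symm

theorem mem_polySubring_of_isCoprime {u v : R[X]} (huv : IsCoprime u v) {G : PowerSeries R}
    (hu : ↑u * G ∈ polySubring R) (hv : ↑v * G ∈ polySubring R) : G ∈ polySubring R := by
  obtain ⟨x, y, hxy⟩ := huv
  have hG : G = ↑x * (↑u * G) + ↑y * (↑v * G) := by
    rw [← mul_assoc, ← mul_assoc, ← add_mul, ← coe_mul, ← coe_mul, ← coe_add, hxy, coe_one,
      one_mul]
  rw [hG]
  exact add_mem (mul_mem (coe_mem_polySubring x) hu) (mul_mem (coe_mem_polySubring y) hv)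

theorem dvd_of_mul_mem_polySubring {a b c : R[X]} (hab : IsCoprime a b) {F : PowerSeries R}
    (hF : ↑b * F = ↑a) (hc : ↑c * F ∈ polySubring R) : b ∣ c := by
  obtain ⟨e, he⟩ := hc
  rw [coeToPowerSeries.ringHom_apply] at he
  have hca : c * a = b * e := by
    apply coe_injective
    rw [coe_mul, coe_mul, ← hF, he]
    ring
  exact hab.symm.dvd_of_dvd_mul_right ⟨e, hca⟩

theorem coeff_zero_ne_zero_of_isCoprime [Nontrivial R] {a b : R[X]} (hab : IsCoprime a b)
    {F : PowerSeries R} (hF : ↑b * F = ↑a) : b.coeff 0 ≠ 0 := by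
  intro hb
  have ha : a.coeff 0 = 0 := by
    rw [← constantCoeff_coe, ← hF, map_mul, constantCoeff_coe, hb, zero_mul]
  exact not_isUnit_X (hab.isUnit_of_dvd' (X_dvd_iff.2 ha) (X_dvd_iff.2 hb))

end Polynomials

section RationalRoot

variable {R : Type*} [CommRing R] [IsDomain R]

theorem dvd_of_sum_mul_pow_mul_pow_eq_zero {a b : R} (hab : IsCoprime a b) (ha : a ≠ 0)
    {P : ℕ → R} {r j : ℕ} (hjr : j ≤ r) (hj : ∀ i < j, P i = 0)
    (h : ∑ i ∈ Finset.range (r + 1), P i * a ^ i * b ^ (r - i) = 0) : a ∣ P j := by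
  have hj_mem : j ∈ Finset.range (r + 1) := Finset.mem_range.2 (Nat.lt_succ_of_le hjr)
  rw [← Finset.add_sum_erase _ _ hj_mem] at h
  have hrest : a ^ (j + 1) ∣ ∑ i ∈ (Finset.range (r + 1)).erase j, P i * a ^ i * b ^ (r - i) := by
    refine Finset.dvd_sum fun i hi => ?_
    rcases lt_or_gt_of_ne (Finset.ne_of_mem_erase hi) with hij | hij
    · simp [hj i hij]
    · exact ((pow_dvd_pow a hij).mul_left _).mul_right _
  have hlead : a ^ j * a ∣ a ^ j * (P j * b ^ (r - j)) := by
    rw [← pow_succ, ← dvd_neg, ← mul_assoc, mul_comm (a ^ j), neg_eq_of_add_eq_zero_right h]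
    exact hrest
  exact hab.pow_right.dvd_of_dvd_mul_right ((mul_dvd_mul_iff_left (pow_ne_zero j ha)).1 hlead)

theorem dvd_top_of_sum_mul_pow_mul_pow_eq_zero {a b : R} (hab : IsCoprime a b) (hb : b ≠ 0)
    {P : ℕ → R} {r : ℕ} (h : ∑ i ∈ Finset.range (r + 1), P i * a ^ i * b ^ (r - i) = 0) :
    b ∣ P r := by
  have h' : ∑ i ∈ Finset.range (r + 1), P (r - i) * b ^ i * a ^ (r - i) = 0 := by
    rw [← Finset.sum_range_reflect, ← h]
    refine Finset.sum_congr rfl fun i hi => ?_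
    rw [Nat.add_sub_cancel, Nat.sub_sub_self (Nat.lt_succ_iff.1 (Finset.mem_range.1 hi))]
    ring
  simpa using dvd_of_sum_mul_pow_mul_pow_eq_zero hab.symm hb (Nat.zero_le r)
    (fun i hi => absurd hi (Nat.not_lt_zero i)) h'

end RationalRoot

section LowestTerms

variable {K : Type*} [Field K]

theorem exists_isCoprime_mul_eq {F : PowerSeries K}
    (h : ∃ a b : K[X], b ≠ 0 ∧ ↑b * F = ↑a) :
    ∃ a b : K[X], b ≠ 0 ∧ IsCoprime a b ∧ ↑b * F = ↑a := by
  classical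
  obtain ⟨a, b, hb, hF⟩ := h
  have hg : gcd a b ≠ 0 := fun hg => hb ((gcd_eq_zero_iff a b).1 hg).2
  refine ⟨a / gcd a b, b / gcd a b, fun h0 => hb ?_, isCoprime_div_gcd_div_gcd hb, ?_⟩
  · rw [← EuclideanDomain.mul_div_cancel' hg (gcd_dvd_right a b), h0, mul_zero]
  · apply mul_left_cancel₀ (coe_eq_zero_iff.not.2 hg)
    rw [← mul_assoc, ← coe_mul, ← coe_mul, EuclideanDomain.mul_div_cancel' hg (gcd_dvd_right a b),
      EuclideanDomain.mul_div_cancel' hg (gcd_dvd_left a b), hF]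

theorem sum_mul_pow_mul_pow_eq_zero {a b : K[X]} {F : PowerSeries K} (hF : ↑b * F = ↑a)
    {r : ℕ} {P : ℕ → K[X]} (h : ∑ i ∈ Finset.range (r + 1), (P i : PowerSeries K) * F ^ i = 0) :
    ∑ i ∈ Finset.range (r + 1), P i * a ^ i * b ^ (r - i) = 0 := by
  apply coe_injective
  rw [← coeToPowerSeries.ringHom_apply, map_sum, coe_zero,
    ← mul_zero ((b : PowerSeries K) ^ r), ← h, Finset.mul_sum]
  refine Finset.sum_congr rfl fun i hi => ?_
  rw [Finset.mem_range] at hi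
  rw [coeToPowerSeries.ringHom_apply, coe_mul, coe_mul, coe_pow, coe_pow, ← hF,
    ← pow_mul_pow_sub _ (Nat.lt_succ_iff.1 hi)]
  ring

theorem natDegree_le_sup_of_sum_mul_pow_mul_pow_eq_zero {a b : K[X]} (hab : IsCoprime a b)
    {r : ℕ} {P : ℕ → K[X]} (hPr : P r ≠ 0)
    (h : ∑ i ∈ Finset.range (r + 1), P i * a ^ i * b ^ (r - i) = 0) :
    a.natDegree ≤ (Finset.range r).sup fun i => (P i).natDegree := by
  classical
  rcases eq_or_ne a 0 with rfl | ha
  · simp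
  have hex : ∃ i, P i ≠ 0 := ⟨r, hPr⟩
  have hmin : ∀ i < Nat.find hex, P i = 0 := fun i hi => not_not.1 (Nat.find_min hex hi)
  have hjr : Nat.find hex < r := by
    refine lt_of_le_of_ne (Nat.find_min' hex hPr) fun hjr => ?_
    rw [Finset.sum_range_succ, Finset.sum_eq_zero fun i hi => by
      rw [hmin i (hjr ▸ Finset.mem_range.1 hi), zero_mul, zero_mul], zero_add, Nat.sub_self,
      pow_zero, mul_one] at h
    exact mul_ne_zero hPr (pow_ne_zero r ha) h
  have hdvd := dvd_of_sum_mul_pow_mul_pow_eq_zero hab ha hjr.le hmin h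
  exact (natDegree_le_of_dvd hdvd (Nat.find_spec hex)).trans
    (Finset.le_sup (f := fun i => (P i).natDegree) (Finset.mem_range.2 hjr))

end LowestTerms

section DifferenceOperator

theorem surjective_of_forall_exists_degree_sub_X_pow_lt {R : Type*} [CommRing R]
    (T : R[X] →ₗ[R] R[X]) (h : ∀ n : ℕ, ∃ P, (T P - X ^ n).degree < ↑n) :
    Function.Surjective T := by
  suffices H : ∀ n : ℕ, ∀ p : R[X], p.degree < n → ∃ P, T P = p from
    fun p => H _ p (degree_le_natDegree.trans_lt (WithBot.coe_lt_coe.2 (Nat.lt_succ_self _)))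
  intro n
  induction n with
  | zero =>
    intro p hp
    refine ⟨0, ?_⟩
    rw [map_zero, eq_comm, ← degree_eq_bot]
    simpa using hp
  | succ n ih =>
    intro p hp
    obtain ⟨P, hP⟩ := h n
    have hlow : (p - C (p.coeff n) * T P).degree < n := by
      rw [degree_lt_iff_coeff_zero] at hP hp ⊢
      intro m hm
      have hPm := hP m hm
      rw [coeff_sub, coeff_X_pow] at hPm
      rw [coeff_sub, coeff_C_mul, sub_eq_zero.1 hPm]
      rcases hm.eq_or_lt with rfl | hm
      · simp
      · simp [hp m hm, hm.ne']
    obtain ⟨Q, hQ⟩ := ih _ hlow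
    refine ⟨Q + p.coeff n • P, ?_⟩
    rw [map_add, map_smul, hQ, smul_eq_C_mul, sub_add_cancel]

variable {k : Type*} [Field k]

theorem coeff_smul_taylor_sub_smul_C_mul_X_pow (α β e : k) (j m : ℕ) :
    ((β • taylor 1 - α • LinearMap.id : k[X] →ₗ[k] k[X]) (C e * X ^ j)).coeff m
      = e * (β * (j.choose m : k) - if m = j then α else 0) := by
  simp only [LinearMap.sub_apply, LinearMap.smul_apply, LinearMap.id_apply, coeff_sub,
    coeff_smul, taylor_apply, mul_comp, C_comp, X_pow_comp, coeff_C_mul, coeff_X_add_C_pow,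
    one_pow, one_mul, coeff_X_pow, smul_eq_mul]
  split_ifs <;> ring

theorem surjective_smul_taylor_sub_smul [CharZero k] {α : k} (hα : α ≠ 0) (β : k) :
    Function.Surjective (β • taylor 1 - α • LinearMap.id : k[X] →ₗ[k] k[X]) := by
  refine surjective_of_forall_exists_degree_sub_X_pow_lt _ fun n => ?_
  rcases ne_or_eq β α with hβα | rfl
  · refine ⟨C (β - α)⁻¹ * X ^ n, ?_⟩
    rw [degree_lt_iff_coeff_zero]
    intro m hm
    rw [coeff_sub, coeff_smul_taylor_sub_smul_C_mul_X_pow, coeff_X_pow]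
    rcases hm.eq_or_lt with rfl | hm
    · rw [if_pos rfl, if_pos rfl, Nat.choose_self, Nat.cast_one, mul_one,
        inv_mul_cancel₀ (sub_ne_zero.2 hβα), sub_self]
    · simp [Nat.choose_eq_zero_of_lt hm, hm.ne']
  · have hn : ((n : k) + 1) ≠ 0 := by exact_mod_cast n.succ_ne_zero
    refine ⟨C (β * (n + 1))⁻¹ * X ^ (n + 1), ?_⟩
    rw [degree_lt_iff_coeff_zero]
    intro m hm
    rw [coeff_sub, coeff_smul_taylor_sub_smul_C_mul_X_pow, coeff_X_pow]
    rcases hm.eq_or_lt with rfl | hm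
    · rw [if_neg (Nat.succ_ne_self n).symm, if_pos rfl, Nat.choose_succ_self_right, sub_zero,
        Nat.cast_succ, inv_mul_cancel₀ (mul_ne_zero hα hn), sub_self]
    · rcases (Nat.succ_le_of_lt hm).eq_or_lt with rfl | hm'
      · simp
      · simp [Nat.choose_eq_zero_of_lt hm', hm'.ne', hm.ne']

end DifferenceOperator

section ExpPoly

variable {k : Type*} [Field k]

noncomputable def expPoly : (k →₀ k[X]) →ₗ[k] ℕ → k :=
  Finsupp.lsum k fun β =>
    { toFun := fun q n => q.eval (n : k) * β ^ n
      map_add' := fun q₁ q₂ => funext fun n => by simp [add_mul]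
      map_smul' := fun c q => funext fun n => by simp [mul_assoc] }

theorem expPoly_single (β : k) (q : k[X]) (n : ℕ) :
    expPoly (Finsupp.single β q) n = q.eval (n : k) * β ^ n := by
  rw [expPoly, Finsupp.lsum_single]
  rfl

theorem expPoly_apply (p : k →₀ k[X]) (n : ℕ) :
    expPoly p n = ∑ β ∈ p.support, (p β).eval (n : k) * β ^ n := by
  simp [expPoly, Finsupp.sum]

def IsEventuallyExpPoly (u : ℕ → k) : Prop :=
  ∃ p : k →₀ k[X], u =ᶠ[atTop] expPoly p

theorem eq_zero_of_eventually_eval_mul_pow_eq_zero [CharZero k] {q : k[X]} {β : k} (hβ : β ≠ 0)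
    (h : ∀ᶠ n : ℕ in atTop, q.eval (n : k) * β ^ n = 0) : q = 0 := by
  obtain ⟨N, hN⟩ := eventually_atTop.1 h
  refine q.eq_zero_of_infinite_isRoot
    (Set.Infinite.mono ?_ ((Set.Ici_infinite N).image Nat.cast_injective.injOn))
  rintro _ ⟨n, hn, rfl⟩
  exact (mul_eq_zero.1 (hN n hn)).resolve_right (pow_ne_zero n hβ)

theorem coeff_succ_one_sub_C_mul_X_mul (α : k) (F : PowerSeries k) (n : ℕ) :
    PowerSeries.coeff (n + 1) (((1 - C α * X : k[X]) : PowerSeries k) * F)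
      = PowerSeries.coeff (n + 1) F - α * PowerSeries.coeff n F := by
  rw [coe_sub, coe_one, coe_mul, coe_C, coe_X, sub_mul, one_mul, map_sub, mul_assoc,
    PowerSeries.coeff_C_mul, PowerSeries.coeff_succ_X_mul]

theorem coeff_taylor_of_natDegree_le {R : Type*} [CommRing R] (r : R) {q : R[X]} {m : ℕ}
    (hm : q.natDegree ≤ m) : (taylor r q).coeff m = q.coeff m := by
  rcases hm.eq_or_lt with rfl | hm
  · simpa only [leadingCoeff, natDegree_taylor] using leadingCoeff_taylor (r := r) (f := q)
  · rw [coeff_eq_zero_of_natDegree_lt hm,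
      coeff_eq_zero_of_natDegree_lt ((natDegree_taylor q r).symm ▸ hm)]

theorem natDegree_sub_taylor_le {R : Type*} [CommRing R] (r : R) {q : R[X]} {D : ℕ}
    (hq : q.natDegree ≤ D + 1) : (q - taylor r q).natDegree ≤ D := by
  rw [natDegree_le_iff_coeff_eq_zero]
  intro m hm
  rw [coeff_sub, coeff_taylor_of_natDegree_le r (hq.trans (Nat.succ_le_of_lt hm)), sub_self]

theorem one_sub_C_mul_X_mul_mk_eval_mul_pow (β : k) (q : k[X]) :
    ((1 - C β * X : k[X]) : PowerSeries k) * PowerSeries.mk (fun n => q.eval (n : k) * β ^ n)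
      = PowerSeries.mk (fun n => (q - taylor (-1) q).eval (n : k) * β ^ n)
        + PowerSeries.C (q.eval (-1)) := by
  ext (_ | n)
  · rw [map_add, PowerSeries.coeff_C, if_pos rfl, PowerSeries.coeff_mk, eval_sub, taylor_eval,
      coe_sub, coe_one, coe_mul, coe_C, coe_X, sub_mul, one_mul, map_sub, mul_assoc,
      PowerSeries.coeff_C_mul, PowerSeries.coeff_zero_X_mul, PowerSeries.coeff_mk]
    simp
  · rw [coeff_succ_one_sub_C_mul_X_mul, map_add, PowerSeries.coeff_C, if_neg n.succ_ne_zero,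
      PowerSeries.coeff_mk, PowerSeries.coeff_mk, PowerSeries.coeff_mk, eval_sub, taylor_eval]
    push_cast
    ring_nf

theorem one_sub_C_mul_X_pow_mul_mk_mem (β : k) {D : ℕ} {q : k[X]} (hq : q.natDegree ≤ D) :
    (((1 - C β * X) ^ (D + 1) : k[X]) : PowerSeries k) *
      PowerSeries.mk (fun n => q.eval (n : k) * β ^ n) ∈ polySubring k := by
  induction D generalizing q with
  | zero =>
    rw [zero_add, pow_one, one_sub_C_mul_X_mul_mk_eval_mul_pow, eq_C_of_natDegree_le_zero hq,
      taylor_C, sub_self]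
    have h0 : (PowerSeries.mk fun n : ℕ => (0 : k[X]).eval (n : k) * β ^ n) = 0 := by
      ext; simp
    rw [h0, zero_add, ← coe_C]
    exact coe_mem_polySubring _
  | succ D ih =>
    rw [pow_succ, coe_mul, mul_assoc, one_sub_C_mul_X_mul_mk_eval_mul_pow, mul_add, ← coe_C,
      ← coe_mul]
    exact add_mem (ih (natDegree_sub_taylor_le (-1) hq)) (coe_mem_polySubring _)

noncomputable def annihilator (p : k →₀ k[X]) : k[X] :=
  ∏ β ∈ p.support, (1 - C β * X) ^ ((p β).natDegree + 1)

theorem annihilator_mul_mem {p : k →₀ k[X]} {G : PowerSeries k}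
    (hG : (fun n => PowerSeries.coeff n G) =ᶠ[atTop] expPoly p) :
    ↑(annihilator p) * G ∈ polySubring k := by
  classical
  set S : k → PowerSeries k := fun β => PowerSeries.mk fun n => (p β).eval (n : k) * β ^ n
  have hrest : G - ∑ β ∈ p.support, S β ∈ polySubring k := by
    refine mem_polySubring_iff.2 (hG.mono fun n hn => ?_)
    simp [S, map_sum, hn, expPoly_apply]
  have hsplit : ↑(annihilator p) * G
      = ↑(annihilator p) * (G - ∑ β ∈ p.support, S β) +
        ∑ β ∈ p.support, ↑(annihilator p) * S β := by
    rw [← Finset.mul_sum, ← mul_add, sub_add_cancel]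
  rw [hsplit]
  refine add_mem (mul_mem (coe_mem_polySubring _) hrest) (sum_mem fun β hβ => ?_)
  rw [annihilator, ← Finset.mul_prod_erase _ _ hβ, coe_mul, mul_right_comm]
  exact mul_mem (one_sub_C_mul_X_pow_mul_mk_mem β le_rfl) (coe_mem_polySubring _)

end ExpPoly

section Uniqueness

variable {k : Type*} [Field k]

theorem isCoprime_one_sub_C_mul_X {β γ : k} (h : β ≠ γ) :
    IsCoprime (1 - C β * X) (1 - C γ * X) := by
  refine ⟨C (γ * (γ - β)⁻¹), C (-β * (γ - β)⁻¹), ?_⟩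
  rw [show C (γ * (γ - β)⁻¹) * (1 - C β * X) + C (-β * (γ - β)⁻¹) * (1 - C γ * X)
      = C ((γ - β) * (γ - β)⁻¹) by simp only [C_mul, C_neg, C_sub]; ring,
    mul_inv_cancel₀ (sub_ne_zero.2 h.symm), C_1]

theorem eq_zero_of_expPoly_eventuallyEq_zero [CharZero k] {p : k →₀ k[X]}
    (h : expPoly p =ᶠ[atTop] 0) {γ : k} (hγ : γ ≠ 0) : p γ = 0 := by
  classical
  -- `G`, the generating series of the `γ`-term, is a polynomial: both `(1 - γX)^(deg + 1)` and
  -- the annihilator of the other terms, which are coprime, multiply it into polynomials.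
  set G := PowerSeries.mk fun n => (p γ).eval (n : k) * γ ^ n
  have hrest : (fun n => PowerSeries.coeff n (-G)) =ᶠ[atTop] expPoly (p.erase γ) := by
    filter_upwards [h] with n hn
    have hsplit := congrFun (congrArg expPoly (Finsupp.single_add_erase γ p)) n
    rw [map_add, Pi.add_apply, expPoly_single, hn, Pi.zero_apply] at hsplit
    rw [map_neg, PowerSeries.coeff_mk, ← add_eq_zero_iff_neg_eq.1 hsplit]
  have hrest' : ↑(annihilator (p.erase γ)) * G ∈ polySubring k := by
    simpa using neg_mem (annihilator_mul_mem hrest)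
  have hcop : IsCoprime ((1 - C γ * X) ^ ((p γ).natDegree + 1)) (annihilator (p.erase γ)) :=
    IsCoprime.prod_right fun β hβ => (isCoprime_one_sub_C_mul_X (β := γ) (γ := β)
      (by rintro rfl; simp at hβ)).pow
  have hG : G ∈ polySubring k :=
    mem_polySubring_of_isCoprime hcop (one_sub_C_mul_X_pow_mul_mk_mem γ le_rfl) hrest'
  apply eq_zero_of_eventually_eval_mul_pow_eq_zero hγ
  simpa [G] using mem_polySubring_iff.1 hG

end Uniqueness

section Recurrence

variable {k : Type*} [Field k]

theorem exists_eventually_eq_mul_pow {w : ℕ → k} {α : k} (hα : α ≠ 0)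
    (h : ∀ᶠ n in atTop, w (n + 1) = α * w n) : ∃ c, ∀ᶠ n in atTop, w n = c * α ^ n := by
  obtain ⟨N, hN⟩ := eventually_atTop.1 h
  refine ⟨w N * (α ^ N)⁻¹, eventually_atTop.2 ⟨N, fun n hn => ?_⟩⟩
  induction n, hn using Nat.le_induction with
  | base => rw [inv_mul_cancel_right₀ (pow_ne_zero N hα)]
  | succ n hn ih => rw [hN n hn, ih, pow_succ]; ring

theorem IsEventuallyExpPoly.of_eventually_succ [CharZero k] {u g : ℕ → k} {α : k} (hα : α ≠ 0)
    (hg : IsEventuallyExpPoly g) (h : ∀ᶠ n in atTop, u (n + 1) = α * u n + g (n + 1)) :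
    IsEventuallyExpPoly u := by
  obtain ⟨p, hp⟩ := hg
  -- A particular solution `H` is found term by term; `u - H` is then eventually `c αⁿ`.
  choose P hP using fun β => surjective_smul_taylor_sub_smul hα β (β • taylor 1 (p β))
  set H : k →₀ k[X] := ∑ β ∈ p.support, Finsupp.single β (P β)
  have hH : ∀ n, expPoly H (n + 1) = α * expPoly H n + expPoly p (n + 1) := by
    intro n
    simp only [H, map_sum, Finset.sum_apply, expPoly_single]
    rw [expPoly_apply, Finset.mul_sum, ← Finset.sum_add_distrib]
    refine Finset.sum_congr rfl fun β _ => ?_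
    have hβ := congrArg (eval (n : k)) (hP β)
    simp only [LinearMap.sub_apply, LinearMap.smul_apply, LinearMap.id_apply, eval_sub, eval_smul,
      taylor_eval, smul_eq_mul] at hβ
    push_cast
    linear_combination β ^ n * hβ
  obtain ⟨c, hc⟩ := exists_eventually_eq_mul_pow (w := u - expPoly H) hα (by
    filter_upwards [h, (tendsto_add_atTop_nat 1).eventually hp] with n hn hpn
    rw [Pi.sub_apply, Pi.sub_apply, hn, hH, hpn]
    ring)
  refine ⟨H + Finsupp.single α (C c), hc.mono fun n hn => ?_⟩
  rw [map_add, Pi.add_apply, expPoly_single, eval_C, ← hn, Pi.sub_apply, add_sub_cancel]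

theorem exists_eq_one_sub_C_inv_mul_X_mul {b : k[X]} {ζ : k} (hζ : b.IsRoot ζ) (hζ0 : ζ ≠ 0) :
    ∃ b₁ : k[X], b = (1 - C ζ⁻¹ * X) * b₁ ∧ b₁.natDegree = b.natDegree - 1 := by
  refine ⟨C (-ζ) * (b /ₘ (X - C ζ)), ?_, ?_⟩
  · have hlin : (1 - C ζ⁻¹ * X) * C (-ζ) = X - C ζ := by
      rw [sub_mul, one_mul, mul_right_comm, ← C_mul, mul_neg, inv_mul_cancel₀ hζ0, C_neg, C_neg,
        C_1]
      ring
    rw [← mul_assoc, hlin, mul_divByMonic_eq_iff_isRoot.2 hζ]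
  · rw [natDegree_C_mul (neg_ne_zero.2 hζ0), natDegree_divByMonic _ (monic_X_sub_C ζ),
      natDegree_X_sub_C]

theorem isEventuallyExpPoly_coeff [IsAlgClosed k] [CharZero k] {F : PowerSeries k} {b : k[X]}
    (hb : b.coeff 0 ≠ 0) (hF : ↑b * F ∈ polySubring k) :
    IsEventuallyExpPoly fun n => PowerSeries.coeff n F := by
  induction h : b.natDegree using Nat.strong_induction_on generalizing b F with
  | _ D ih =>
  rcases D.eq_zero_or_pos with rfl | hD
  · refine ⟨0, ?_⟩
    rw [eq_C_of_natDegree_eq_zero h] at hF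
    have hFmem : F ∈ polySubring k := by
      have := mul_mem (coe_mem_polySubring (C (b.coeff 0)⁻¹)) hF
      rwa [← mul_assoc, ← coe_mul, ← C_mul, inv_mul_cancel₀ hb, C_1, coe_one, one_mul] at this
    filter_upwards [mem_polySubring_iff.1 hFmem] with n hn
    rw [hn, map_zero, Pi.zero_apply]
  obtain ⟨ζ, hζ⟩ :=
    IsAlgClosed.exists_root b fun h0 => hD.ne' (h ▸ natDegree_eq_of_degree_eq_some h0)
  have hζ0 : ζ ≠ 0 := by
    rintro rfl
    exact hb (by rwa [coeff_zero_eq_eval_zero])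
  obtain ⟨b₁, hb₁, hdeg⟩ := exists_eq_one_sub_C_inv_mul_X_mul hζ hζ0
  have hb₁0 : b₁.coeff 0 ≠ 0 := by
    rwa [hb₁, mul_coeff_zero, coeff_sub, coeff_one_zero, coeff_C_mul_X, if_neg zero_ne_one,
      sub_zero, one_mul] at hb
  have hG := ih _ (by omega) hb₁0 (F := ((1 - C ζ⁻¹ * X : k[X]) : PowerSeries k) * F)
    (by rwa [← mul_assoc, ← coe_mul, mul_comm b₁, ← hb₁]) rfl
  exact IsEventuallyExpPoly.of_eventually_succ (inv_ne_zero hζ0) hG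
    (Eventually.of_forall fun n => by rw [coeff_succ_one_sub_C_mul_X_mul]; ring)

end Recurrence

section Multiplicative

theorem exists_prime_forall_injOn_pow {k : Type*} [Field k] (S : Finset k) :
    ∃ q : ℕ, q.Prime ∧ ∀ e, Set.InjOn (fun x : k => x ^ q ^ e) S := by
  obtain ⟨q, hMq, hq⟩ :=
    Nat.exists_infinite_primes ((S ×ˢ S).sup (fun x => orderOf (x.1 * x.2⁻¹)) + 1)
  refine ⟨q, hq, fun e x hx y hy hxy => ?_⟩
  have hqe : q ^ e ≠ 0 := pow_ne_zero e hq.ne_zero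
  rcases eq_or_ne y 0 with rfl | hy0
  · exact (pow_eq_zero_iff hqe).1 (hxy.trans (zero_pow hqe))
  have hxy1 : (x * y⁻¹) ^ q ^ e = 1 := by
    simp only at hxy
    rw [mul_pow, inv_pow, hxy, mul_inv_cancel₀ (pow_ne_zero _ hy0)]
  obtain ⟨j, -, hj⟩ := (Nat.dvd_prime_pow hq).1 (orderOf_dvd_of_pow_eq_one hxy1)
  have hle : orderOf (x * y⁻¹) ≤ (S ×ˢ S).sup (fun x => orderOf (x.1 * x.2⁻¹)) :=
    Finset.le_sup (f := fun x : k × k => orderOf (x.1 * x.2⁻¹))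
      (Finset.mem_product.2 ⟨hx, hy⟩ : (x, y) ∈ S ×ˢ S)
  have hlt : orderOf (x * y⁻¹) < q := Nat.lt_of_lt_of_le (Nat.lt_succ_of_le hle) hMq
  obtain rfl : j = 0 := by
    by_contra hj0
    exact (Nat.le_self_pow hj0 q).not_gt (hj ▸ hlt)
  rw [pow_zero, orderOf_eq_one_iff, mul_inv_eq_one₀ hy0] at hj
  exact hj

theorem isOfFinOrder_of_forall_pow_pow_mem {M₀ : Type*} [MonoidWithZero M₀]
    [IsLeftCancelMulZero M₀] {W : Set M₀} (hW : W.Finite) {q : ℕ} (hq : 2 ≤ q) {a : M₀}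
    (ha : a ≠ 0) (h : ∀ j, a ^ q ^ j ∈ W) : IsOfFinOrder a := by
  obtain ⟨i, j, hij, heq⟩ := hW.exists_lt_map_eq_of_forall_mem h
  have hlt : q ^ i < q ^ j := Nat.pow_lt_pow_right hq hij
  refine isOfFinOrder_iff_pow_eq_one.2 ⟨q ^ j - q ^ i, Nat.sub_pos_of_lt hlt, ?_⟩
  apply mul_left_cancel₀ (pow_ne_zero (q ^ i) ha)
  rw [← pow_add, Nat.add_sub_cancel' hlt.le, mul_one, heq]

variable {k : Type*} [Field k]

theorem comp_C_mul_X_add_C_ne_zero {q : k[X]} (hq : q ≠ 0) {d : k} (hd : d ≠ 0) (a : k) :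
    q.comp (C d * X + C a) ≠ 0 := by
  rw [Ne, comp_eq_zero_iff, not_or]
  refine ⟨hq, fun ⟨_, h⟩ => hd ?_⟩
  simpa using congrArg (coeff · 1) h

noncomputable def compAffine (p : k →₀ k[X]) (a d : ℕ) : k →₀ k[X] :=
  ∑ x ∈ p.support, Finsupp.single (x ^ d) (C (x ^ a) * (p x).comp (C (d : k) * X + C (a : k)))

theorem expPoly_compAffine (p : k →₀ k[X]) (a d t : ℕ) :
    expPoly (compAffine p a d) t = expPoly p (a + d * t) := by
  rw [compAffine, map_sum, Finset.sum_apply, expPoly_apply]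
  refine Finset.sum_congr rfl fun x _ => ?_
  rw [expPoly_single, eval_mul, eval_C, eval_comp, eval_add, eval_mul, eval_C, eval_X, eval_C,
    ← pow_mul, pow_add]
  push_cast
  rw [add_comm ((d : k) * t)]
  ring

theorem compAffine_apply_pow {p : k →₀ k[X]} {d : ℕ} (hinj : Set.InjOn (· ^ d) (p.support : Set k))
    {y : k} (hy : y ∈ p.support) (a : ℕ) :
    compAffine p a d (y ^ d) = C (y ^ a) * (p y).comp (C (d : k) * X + C (a : k)) := by
  rw [compAffine, Finsupp.finsetSum_apply, Finset.sum_eq_single y]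
  · exact Finsupp.single_eq_same
  · exact fun x hx hxy => Finsupp.single_eq_of_ne' fun h => hxy (hinj hx hy h)
  · exact fun h => absurd hy h

theorem compAffine_apply_eq_zero {p : k →₀ k[X]} {d : ℕ} {γ : k} (h : ∀ x ∈ p.support, x ^ d ≠ γ)
    (a : ℕ) : compAffine p a d γ = 0 := by
  rw [compAffine, Finsupp.finsetSum_apply]
  exact Finset.sum_eq_zero fun x hx => Finsupp.single_eq_of_ne' (h x hx)

theorem exists_pow_eq_pow_mul_self [CharZero k] {f : ℕ → k}
    (hmul : ∀ m n, 0 < m → 0 < n → m.Coprime n → f (m * n) = f m * f n) {p : k →₀ k[X]}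
    (hf : f =ᶠ[atTop] expPoly p) {q : ℕ} (hq : q.Prime)
    (hinj : ∀ e, Set.InjOn (fun x : k => x ^ q ^ e) p.support) {a : k} (ha : a ∈ p.support) :
    ∃ b ∈ p.support, b ^ q = a ^ (q * q) := by
  rcases eq_or_ne a 0 with rfl | ha0
  · exact ⟨0, ha, by rw [zero_pow hq.ne_zero, zero_pow (mul_ne_zero hq.ne_zero hq.ne_zero)]⟩
  by_contra! hno
  -- By uniqueness, the base `a^(q*q)` of the left side of `f(q(1+qt)) = f(q) f(1+qt)`, whose
  -- coefficient is nonzero, must occur among the bases `x^q` of the right side.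
  have hAP (c d : ℕ) (hd : 0 < d) : ∀ᶠ t in atTop, f (c + d * t) = expPoly p (c + d * t) :=
    (tendsto_atTop_mono (fun t => le_add_left (Nat.le_mul_of_pos_left t hd))
      tendsto_id).eventually hf
  have hrel : expPoly (compAffine p q (q * q) - f q • compAffine p 1 q) =ᶠ[atTop] 0 := by
    filter_upwards [hAP q (q * q) (mul_pos hq.pos hq.pos), hAP 1 q hq.pos] with t h1 h2
    have hcop : q.Coprime (1 + q * t) := by
      rw [mul_comm q t]
      exact (Nat.coprime_add_mul_right_right q 1 t).2 (Nat.coprime_one_right q)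
    rw [map_sub, map_smul, Pi.sub_apply, Pi.smul_apply, expPoly_compAffine, expPoly_compAffine,
      ← h1, ← h2, smul_eq_mul, show q + q * q * t = q * (1 + q * t) by ring,
      hmul q _ hq.pos (by omega) hcop, sub_self, Pi.zero_apply]
  have hzero := eq_zero_of_expPoly_eventuallyEq_zero hrel (pow_ne_zero (q * q) ha0)
  rw [Finsupp.sub_apply, Finsupp.smul_apply, compAffine_apply_eq_zero (fun x _ => hno x ‹_›),
    smul_zero, sub_zero, compAffine_apply_pow (by simpa only [sq] using hinj 2) ha] at hzero
  exact mul_ne_zero (C_ne_zero.2 (pow_ne_zero q ha0)) (comp_C_mul_X_add_C_ne_zero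
    (Finsupp.mem_support_iff.1 ha) (by exact_mod_cast (mul_pos hq.pos hq.pos).ne') _) hzero

theorem isOfFinOrder_of_mem_support [CharZero k] {f : ℕ → k}
    (hmul : ∀ m n, 0 < m → 0 < n → m.Coprime n → f (m * n) = f m * f n) {p : k →₀ k[X]}
    (hf : f =ᶠ[atTop] expPoly p) {β : k} (hβ : β ∈ p.support) (hβ0 : β ≠ 0) :
    IsOfFinOrder β := by
  classical
  obtain ⟨q, hq, hinj⟩ := exists_prime_forall_injOn_pow p.support
  set W := p.support.image (· ^ q)
  have hW : ∀ w ∈ W, w ^ q ∈ W := by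
    intro w hw
    obtain ⟨b, hb, rfl⟩ := Finset.mem_image.1 hw
    obtain ⟨c, hc, hcb⟩ := exists_pow_eq_pow_mul_self hmul hf hq hinj hb
    exact Finset.mem_image.2 ⟨c, hc, by rw [hcb, pow_mul]⟩
  have hmem : ∀ j, (β ^ q) ^ q ^ j ∈ W := by
    intro j
    induction j with
    | zero => rw [pow_zero, pow_one]; exact Finset.mem_image_of_mem _ hβ
    | succ j ih => rw [pow_succ, pow_mul]; exact hW _ ih
  exact (isOfFinOrder_of_forall_pow_pow_mem W.finite_toSet hq.two_le (pow_ne_zero q hβ0)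
    hmem).of_pow hq.ne_zero

end Multiplicative

section RootsOfUnity

variable {k : Type*} [Field k]

theorem exists_mul_eq_one_of_isRoot_annihilator {p : k →₀ k[X]} {ζ : k}
    (h : (annihilator p).IsRoot ζ) : ∃ β ∈ p.support, β * ζ = 1 := by
  rw [IsRoot, annihilator, eval_prod, Finset.prod_eq_zero_iff] at h
  obtain ⟨β, hβ, hz⟩ := h
  rw [eval_pow, pow_eq_zero_iff (Nat.succ_ne_zero _), eval_sub, eval_one, eval_mul, eval_C,
    eval_X, sub_eq_zero] at hz
  exact ⟨β, hβ, hz.symm⟩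

theorem isOfFinOrder_of_isRoot [IsAlgClosed k] [CharZero k] {f : ℕ → k}
    (hmul : ∀ m n, 0 < m → 0 < n → m.Coprime n → f (m * n) = f m * f n) {F : PowerSeries k}
    (hF : (fun n => PowerSeries.coeff n F) =ᶠ[atTop] f) {a b : k[X]} (hab : IsCoprime a b)
    (h : ↑b * F = ↑a) {ζ : k} (hζ : b.IsRoot ζ) : IsOfFinOrder ζ := by
  obtain ⟨p, hp⟩ := isEventuallyExpPoly_coeff (coeff_zero_ne_zero_of_isCoprime hab h)
    (h ▸ coe_mem_polySubring a)
  have hdvd : b ∣ annihilator p := dvd_of_mul_mem_polySubring hab h (annihilator_mul_mem hp)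
  obtain ⟨β, hβ, hβζ⟩ := exists_mul_eq_one_of_isRoot_annihilator (hζ.dvd hdvd)
  obtain ⟨m, hm, hβm⟩ := isOfFinOrder_iff_pow_eq_one.1
    (isOfFinOrder_of_mem_support hmul (hF.symm.trans hp) hβ (left_ne_zero_of_mul_eq_one hβζ))
  refine isOfFinOrder_iff_pow_eq_one.2 ⟨m, hm, ?_⟩
  rw [eq_inv_of_mul_eq_one_right hβζ, inv_pow, hβm, inv_one]

theorem isOfFinOrder_of_isRoot_map {K : Type*} [Field K] [CharZero K] {f : ℕ → K}
    (hmul : ∀ m n, 0 < m → 0 < n → m.Coprime n → f (m * n) = f m * f n) {F : PowerSeries K}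
    (hF : (fun n => PowerSeries.coeff n F) =ᶠ[atTop] f) {a b : K[X]} (hab : IsCoprime a b)
    (h : ↑b * F = ↑a) {ζ : AlgebraicClosure K} (hζ : (b.map (algebraMap K _)).IsRoot ζ) :
    IsOfFinOrder ζ := by
  set ι := algebraMap K (AlgebraicClosure K)
  refine isOfFinOrder_of_isRoot (f := fun n => ι (f n))
    (fun m n hm hn hmn => by rw [hmul m n hm hn hmn, map_mul]) (F := PowerSeries.map ι F)
    (hF.mono fun n hn => by dsimp only at hn ⊢; rw [PowerSeries.coeff_map, hn])
    (hab.map (mapRingHom ι)) ?_ hζ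
  change ↑(b.map ι) * PowerSeries.map ι F = ↑(a.map ι)
  rw [polynomial_map_coe, polynomial_map_coe, ← map_mul, h]

end RootsOfUnity

section Descent

open IntermediateField in
theorem natDegree_minpoly_le_finrank_mul {k K L : Type*} [Field k] [Field K] [Field L]
    [Algebra k K] [Algebra K L] [Algebra k L] [IsScalarTower k K L] [FiniteDimensional k K]
    {x : L} (hx : IsIntegral K x) :
    (minpoly k x).natDegree ≤ Module.finrank k K * (minpoly K x).natDegree := by
  have : FiniteDimensional K K⟮x⟯ := adjoin.finiteDimensional hx
  have : FiniteDimensional k K⟮x⟯ := Module.Finite.trans K K⟮x⟯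
  have : IsScalarTower k K⟮x⟯ L := IsScalarTower.of_algebraMap_eq fun _ => rfl
  rw [← adjoin.finrank hx, Module.finrank_mul_finrank k K K⟮x⟯, ← AdjoinSimple.algebraMap_gen K x,
    minpoly.algebraMap_eq (algebraMap K⟮x⟯ L).injective]
  exact minpoly.natDegree_le _

theorem isOfFinOrder_of_isRoot_of_dvd_X_pow_sub_one {k L : Type*} [Field k] [Field L]
    (φ : k →+* L) {B : k[X]} {m : ℕ} (hm : 0 < m) (hB : B ∣ X ^ m - 1) {z : L}
    (hz : (B.map φ).IsRoot z) : IsOfFinOrder z := by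
  have hz' := hz.dvd (map_dvd φ hB)
  rw [IsRoot, Polynomial.map_sub, Polynomial.map_pow, map_X, Polynomial.map_one, eval_sub,
    eval_pow, eval_X, eval_one, sub_eq_zero] at hz'
  exact isOfFinOrder_iff_pow_eq_one.2 ⟨m, hm, hz'⟩

theorem exists_dvd_map_of_forall_isOfFinOrder {k K : Type*} [Field k] [Field K] [Algebra k K]
    [FiniteDimensional k K] (L : Type*) [Field L] [Algebra k L] {b : K[X]} (hb : b ≠ 0)
    (hroots : ∀ ζ : AlgebraicClosure K, (b.map (algebraMap K _)).IsRoot ζ → IsOfFinOrder ζ) :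
    ∃ B : k[X], B ≠ 0 ∧ b ∣ B.map (algebraMap k K) ∧
      (∀ z : L, (B.map (algebraMap k L)).IsRoot z → IsOfFinOrder z) ∧
      B.natDegree ≤ Module.finrank k K * b.natDegree := by
  induction b using WfDvdMonoid.induction_on_irreducible with
  | zero => exact absurd rfl hb
  | unit u hu =>
    refine ⟨1, one_ne_zero, by simpa using hu.dvd, fun z hz => ?_, by simp⟩
    simp at hz
  | mul a i ha hi ih =>
    obtain ⟨B₁, hB₁, hB₁dvd, hB₁roots, hB₁deg⟩ := ih ha fun ζ hζ =>
      hroots ζ (hζ.dvd (by rw [Polynomial.map_mul]; exact dvd_mul_left _ _))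
    obtain ⟨ζ, hζ⟩ := IsAlgClosed.exists_root (i.map (algebraMap K (AlgebraicClosure K)))
      (by rw [degree_map]; exact (degree_pos_of_irreducible hi).ne')
    have hζi : aeval ζ i = 0 := by rwa [← eval_map_algebraMap]
    have hiK : i * C i.leadingCoeff⁻¹ = minpoly K ζ := minpoly.eq_of_irreducible hi hζi
    have hint : IsIntegral K ζ := Algebra.IsIntegral.isIntegral ζ
    have hintk : IsIntegral k ζ := isIntegral_trans ζ hint
    obtain ⟨m, hm, hζm⟩ := isOfFinOrder_iff_pow_eq_one.1
      (hroots ζ (hζ.dvd (by rw [Polynomial.map_mul]; exact dvd_mul_right _ _)))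
    have hXm : minpoly k ζ ∣ X ^ m - 1 := minpoly.dvd k ζ (by simp [hζm])
    refine ⟨minpoly k ζ * B₁, mul_ne_zero (minpoly.ne_zero hintk) hB₁, ?_, fun z hz => ?_, ?_⟩
    · rw [Polynomial.map_mul]
      exact mul_dvd_mul ((Dvd.intro _ hiK).trans (minpoly.dvd_map_of_isScalarTower k K ζ))
        hB₁dvd
    · rw [IsRoot, Polynomial.map_mul, eval_mul, mul_eq_zero] at hz
      exact hz.elim (isOfFinOrder_of_isRoot_of_dvd_X_pow_sub_one _ hm hXm) (hB₁roots z)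
    · have hdeg : (minpoly K ζ).natDegree = i.natDegree := by
        rw [← hiK, natDegree_mul_C (inv_ne_zero (leadingCoeff_ne_zero.2 hi.ne_zero))]
      rw [natDegree_mul (minpoly.ne_zero hintk) hB₁, natDegree_mul hi.ne_zero ha, mul_add, ← hdeg]
      exact add_le_add (natDegree_minpoly_le_finrank_mul hint) hB₁deg

theorem exists_map_mul_eq_of_forall_isOfFinOrder {k K : Type*} [Field k] [Field K] [Algebra k K]
    [FiniteDimensional k K] (L : Type*) [Field L] [Algebra k L] {F : PowerSeries K} {a b : K[X]}
    (hb : b ≠ 0) (hF : ↑b * F = ↑a)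
    (hroots : ∀ ζ : AlgebraicClosure K, (b.map (algebraMap K _)).IsRoot ζ → IsOfFinOrder ζ) :
    ∃ (A : K[X]) (B : k[X]), B ≠ 0 ∧ ((B.map (algebraMap k K) : K[X]) : PowerSeries K) * F = ↑A ∧
      (∀ z : L, (B.map (algebraMap k L)).IsRoot z → IsOfFinOrder z) ∧
      B.natDegree ≤ Module.finrank k K * b.natDegree ∧
      A.natDegree ≤ a.natDegree + (Module.finrank k K - 1) * b.natDegree := by
  obtain ⟨B, hB, ⟨w, hw⟩, hBroots, hBdeg⟩ :=
    exists_dvd_map_of_forall_isOfFinOrder (k := k) L hb hroots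
  have hw0 : w ≠ 0 := by
    rintro rfl
    exact hB (map_injective _ (algebraMap k K).injective
      (by rw [hw, mul_zero, Polynomial.map_zero]))
  have hBw : B.natDegree = b.natDegree + w.natDegree := by
    rw [← natDegree_map_eq_of_injective (algebraMap k K).injective, hw, natDegree_mul hb hw0]
  refine ⟨a * w, B, hB, ?_, hBroots, hBdeg, natDegree_mul_le.trans (Nat.add_le_add_left ?_ _)⟩
  · rw [hw, coe_mul, coe_mul, mul_right_comm, hF]
  · rw [Nat.sub_one_mul]
    omega

end Descent

end RationalMultiplicative

open RationalMultiplicative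

theorem rational_bound_lemma_general
    (K : Type*) [Field K] [Algebra ℚ K] [FiniteDimensional ℚ K]
    (d : ℕ) (hd : Module.finrank ℚ K = d)
    (f : ℕ → K)
    (hfmul : ∀ m n : ℕ, 0 < m → 0 < n → Nat.Coprime m n → f (m * n) = f m * f n)
    (hrat : ∃ (a b : Polynomial K), b ≠ 0 ∧
      (b : PowerSeries K) * (PowerSeries.mk fun n => if n = 0 then 0 else f n)
        = (a : PowerSeries K))
    (r : ℕ) (P : ℕ → Polynomial K) (hPr : P r ≠ 0)
    (heq : ∑ i ∈ Finset.range (r + 1),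
      (P i : PowerSeries K) * (PowerSeries.mk fun n => if n = 0 then 0 else f n) ^ i = 0) :
    ∃ (A : Polynomial K) (B : Polynomial ℚ), B ≠ 0 ∧
      ((B.map (algebraMap ℚ K) : Polynomial K) : PowerSeries K) *
        (PowerSeries.mk fun n => if n = 0 then 0 else f n) = (A : PowerSeries K) ∧
      (∀ z : ℂ, (B.map (algebraMap ℚ ℂ)).IsRoot z → ∃ m : ℕ, 1 ≤ m ∧ z ^ m = 1) ∧
      B.natDegree ≤ Nat.factorial d * (P r).natDegree ∧
      A.natDegree ≤ (Finset.range r).sup (fun i => (P i).natDegree) +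
        (r * Nat.factorial d - 1) * (P r).natDegree := by
  subst hd
  set F : PowerSeries K := PowerSeries.mk fun n => if n = 0 then 0 else f n
  have : CharZero K := charZero_of_injective_algebraMap (algebraMap ℚ K).injective
  obtain ⟨a, b, hb, hab, hbF⟩ := exists_isCoprime_mul_eq hrat
  have hQ := sum_mul_pow_mul_pow_eq_zero hbF heq
  have hr : r ≠ 0 := by
    rintro rfl
    exact hPr (by simpa using hQ)
  have hbP : b.natDegree ≤ (P r).natDegree :=
    natDegree_le_of_dvd (dvd_top_of_sum_mul_pow_mul_pow_eq_zero hab hb hQ) hPr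
  have haP := natDegree_le_sup_of_sum_mul_pow_mul_pow_eq_zero hab hPr hQ
  have hF : (fun n => PowerSeries.coeff n F) =ᶠ[atTop] f :=
    (eventually_gt_atTop 0).mono fun n hn => by simp [F, hn.ne']
  obtain ⟨A, B, hB, hBF, hBroots, hBdeg, hAdeg⟩ := exists_map_mul_eq_of_forall_isOfFinOrder
    (k := ℚ) ℂ hb hbF fun ζ => isOfFinOrder_of_isRoot_map hfmul hF hab hbF
  have hd : Module.finrank ℚ K ≤ r * (Module.finrank ℚ K).factorial :=
    (Nat.self_le_factorial _).trans (Nat.le_mul_of_pos_left _ (Nat.pos_of_ne_zero hr))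
  refine ⟨A, B, hB, hBF, fun z hz => isOfFinOrder_iff_pow_eq_one.1 (hBroots z hz),
    hBdeg.trans (Nat.mul_le_mul (Nat.self_le_factorial _) hbP),
    hAdeg.trans (add_le_add haP (Nat.mul_le_mul (Nat.sub_le_sub_right hd 1) hbP))⟩

/-- Let `K` be a finite extension of `ℚ` of degree `d` and `f : ℕ≥1 → K`
multiplicative with `F(z) = ∑_{n≥1} f(n) zⁿ` rational in `K(z)`, satisfying
`∑_{i=0}^r P_i(z) F(z)^i = 0` with `P_r ≠ 0`. Then `F = A/B` with `A ∈ K[z]`,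
`B ∈ ℚ[z]` nonzero, all complex roots of `B` roots of unity,
`deg B ≤ d!·deg P_r` and `deg A ≤ max_{0≤i≤r−1} deg P_i + (r·d! − 1)·deg P_r`. -/
theorem rational_bound_lemma
    (K : Type*) [Field K] [Algebra ℚ K] [FiniteDimensional ℚ K]
    (d : ℕ) (hd : Module.finrank ℚ K = d)
    (f : ℕ → K)
    (hf1 : f 1 = 1)
    (hfmul : ∀ m n : ℕ, 0 < m → 0 < n → Nat.Coprime m n → f (m * n) = f m * f n)
    (hrat : ∃ (a b : Polynomial K), b ≠ 0 ∧
      (b : PowerSeries K) * (PowerSeries.mk fun n => if n = 0 then 0 else f n)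
        = (a : PowerSeries K))
    (r : ℕ) (P : ℕ → Polynomial K) (hPr : P r ≠ 0)
    (heq : ∑ i ∈ Finset.range (r + 1),
      (P i : PowerSeries K) * (PowerSeries.mk fun n => if n = 0 then 0 else f n) ^ i = 0) :
    ∃ (A : Polynomial K) (B : Polynomial ℚ), B ≠ 0 ∧
      ((B.map (algebraMap ℚ K) : Polynomial K) : PowerSeries K) *
        (PowerSeries.mk fun n => if n = 0 then 0 else f n) = (A : PowerSeries K) ∧
      (∀ z : ℂ, (B.map (algebraMap ℚ ℂ)).IsRoot z → ∃ m : ℕ, 1 ≤ m ∧ z ^ m = 1) ∧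
      B.natDegree ≤ Nat.factorial d * (P r).natDegree ∧
      A.natDegree ≤ (Finset.range r).sup (fun i => (P i).natDegree) +
        (r * Nat.factorial d - 1) * (P r).natDegree :=
  rational_bound_lemma_general K d hd f hfmul hrat r P hPr heq
end

section
/- Let g : ℕ → ℂ and suppose the power series G(z) = ∑_{n≥0} g(n) z^n has positive radius of convergence and that there exist a finite set S of roots of unity and a function analytic on ℂ \ S that agrees with the sum of G on some neighborhood of 0. Then there is a natural number N ≥ 1 such that for every j with 0 ≤ j < N there exists a function analytic on ℂ \ {1} that agrees with the sum of the power series G_j(z) = ∑_{n≥0} g(Nn+j) z^n on some neighborhood of 0. -/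
/-!
Take `N` with `ζ ^ N = 1` for all `ζ ∈ S`. The roots-of-unity filter
`G_j(z ^ N) = (N z ^ j)⁻¹ ∑_{ζ ^ N = 1} ζ⁻ʲ G(ζ z)` expresses the section through rotations of `G`,
so it is analytic wherever `z ≠ 0` and `z ^ N ≠ 1`. Being invariant under `z ↦ ζ z`, it descends
along `w = z ^ N`, through local analytic branches of the `N`-th root, to a function of `w`
analytic off `w = 0` and `w = 1`; near `w = 0` it is the sum of a convergent power series.
-/

open Polynomial Finset

theorem Finset.exists_pos_forall_pow_eq_one {M : Type*} [CommMonoid M] (S : Finset M)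
    (hS : ∀ ζ ∈ S, ∃ m : ℕ, 1 ≤ m ∧ ζ ^ m = 1) : ∃ N : ℕ, 1 ≤ N ∧ ∀ ζ ∈ S, ζ ^ N = 1 := by
  choose! m hm_pos hm using hS
  refine ⟨∏ ζ ∈ S, m ζ, one_le_prod' hm_pos, fun ζ hζ => ?_⟩
  obtain ⟨c, hc⟩ := dvd_prod_of_mem m hζ
  rw [hc, pow_mul, hm ζ hζ, one_pow]

theorem analyticAt_zero_of_hasSum_mul_pow {𝕜 : Type*} [NontriviallyNormedField 𝕜]
    {a : ℕ → 𝕜} {f : 𝕜 → 𝕜} {r : ℝ} (hr : 0 < r)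
    (hf : ∀ w : 𝕜, ‖w‖ < r → HasSum (fun n => a n * w ^ n) (f w)) : AnalyticAt 𝕜 f 0 := by
  obtain ⟨w, hw_pos, hw_lt⟩ := NormedField.exists_norm_lt 𝕜 hr
  let p := FormalMultilinearSeries.ofScalars 𝕜 a
  have hp : ∀ x : 𝕜, ‖x‖ < r → HasSum (fun n => p n fun _ => x) (f x) := fun x hx => by
    simpa [p, FormalMultilinearSeries.ofScalars_apply_eq, mul_comm] using hf x hx
  have hradius : (‖w‖₊ : ENNReal) ≤ p.radius := by
    refine p.le_radius_of_tendsto (l := 0) ?_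
    simpa [p, FormalMultilinearSeries.ofScalars_norm] using
      (hf w hw_lt).summable.tendsto_atTop_zero.norm
  have hball : HasFPowerSeriesOnBall f p 0 ‖w‖₊ := by
    refine ⟨hradius, by simpa using hw_pos, fun {y} hy => ?_⟩
    rw [zero_add]
    refine hp y (lt_trans ?_ hw_lt)
    simpa using hy
  exact hball.analyticAt

theorem hasSum_ite_modEq_iff {M : Type*} [AddCommMonoid M] [TopologicalSpace M] {N j : ℕ}
    (hj : j < N) (f : ℕ → M) (a : M) :
    HasSum (fun n => if n ≡ j [MOD N] then f n else 0) a ↔ HasSum (fun m => f (N * m + j)) a := by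
  have hinj : Function.Injective fun m => N * m + j := fun m m' h => by
    simpa [(Nat.zero_le j).trans_lt hj |>.ne'] using h
  have hvanish : ∀ n ∉ Set.range fun m => N * m + j,
      (if n ≡ j [MOD N] then f n else 0) = 0 := fun n hn => by
    refine if_neg fun hnj => hn ⟨n / N, ?_⟩
    have hmod : n % N = j := Eq.trans hnj (Nat.mod_eq_of_lt hj)
    simpa only [hmod] using Nat.div_add_mod n N
  rw [← hinj.hasSum_iff hvanish]
  congr! 1
  funext m
  exact if_pos (by simp [Nat.ModEq])

section RootsOfUnity

variable {K : Type*} [Field K]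

theorem sum_nthRootsFinset_mul_right {M : Type*} [AddCommMonoid M] {N : ℕ} {η : K}
    (hη : η ∈ nthRootsFinset N (1 : K)) (F : K → M) :
    ∑ ζ ∈ nthRootsFinset N (1 : K), F (ζ * η) = ∑ ζ ∈ nthRootsFinset N (1 : K), F ζ := by
  have hη0 : η ≠ 0 := ne_zero_of_mem_nthRootsFinset one_ne_zero hη
  have hη_inv : η⁻¹ ∈ nthRootsFinset N (1 : K) := by
    have hN : 0 < N := by by_contra! h; simp_all
    rw [mem_nthRootsFinset hN] at hη ⊢
    rw [inv_pow, hη, inv_one]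
  refine sum_nbij' (· * η) (· * η⁻¹) (fun ζ hζ => ?_) (fun ζ hζ => ?_) (fun ζ _ => ?_)
    (fun ζ _ => ?_) (fun _ _ => rfl)
  · simpa using mul_mem_nthRootsFinset hζ hη
  · simpa using mul_mem_nthRootsFinset hζ hη_inv
  · simp [hη0]
  · simp [hη0]

theorem IsPrimitiveRoot.sum_nthRootsFinset_pow_mul_inv_pow {ω : K} {N : ℕ}
    (hω : IsPrimitiveRoot ω N) (n j : ℕ) :
    ∑ ζ ∈ nthRootsFinset N (1 : K), ζ ^ n * (ζ ^ j)⁻¹ = if n ≡ j [MOD N] then (N : K) else 0 := by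
  rcases Nat.eq_zero_or_pos N with rfl | hN
  · simp
  split_ifs with hnj
  · calc ∑ ζ ∈ nthRootsFinset N (1 : K), ζ ^ n * (ζ ^ j)⁻¹
        = ∑ ζ ∈ nthRootsFinset N (1 : K), 1 := sum_congr rfl fun ζ hζ => by
          have hζN : ζ ^ N = 1 := (Polynomial.mem_nthRootsFinset hN 1).1 hζ
          have hζ0 : ζ ≠ 0 := ne_zero_of_mem_nthRootsFinset one_ne_zero hζ
          rw [pow_eq_pow_mod n hζN, hnj, ← pow_eq_pow_mod j hζN,
            mul_inv_cancel₀ (pow_ne_zero j hζ0)]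
      _ = N := by rw [sum_const, hω.card_nthRootsFinset, nsmul_one]
  · set S := ∑ ζ ∈ nthRootsFinset N (1 : K), ζ ^ n * (ζ ^ j)⁻¹
    -- rotating every root by `ω` multiplies `S` by `ω ^ n / ω ^ j ≠ 1`
    have hrot : S = ω ^ n * (ω ^ j)⁻¹ * S := calc
      S = ∑ ζ ∈ nthRootsFinset N (1 : K), (ζ * ω) ^ n * ((ζ * ω) ^ j)⁻¹ :=
        (sum_nthRootsFinset_mul_right (hω.mem_nthRootsFinset hN) _).symm
      _ = ω ^ n * (ω ^ j)⁻¹ * S := by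
        rw [mul_sum]
        exact sum_congr rfl fun ζ _ => by rw [mul_pow, mul_pow, mul_inv]; ring
    have hne : ω ^ n * (ω ^ j)⁻¹ ≠ 1 := by
      rw [Ne, mul_inv_eq_one₀ (pow_ne_zero j (hω.ne_zero hN.ne')),
        (hω.isOfFinOrder hN.ne').pow_eq_pow_iff_modEq, ← hω.eq_orderOf]
      exact hnj
    by_contra hS
    exact hne (mul_right_cancel₀ hS (hrot.symm.trans (one_mul S).symm))

/-- The roots-of-unity filter: for `f z = ∑ aₙ zⁿ` this is `∑ₘ a_{Nm+j} (z ^ N) ^ m`. -/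
noncomputable def multisection (N j : ℕ) (f : K → K) (z : K) : K :=
  (N : K)⁻¹ * (z ^ j)⁻¹ * ∑ ζ ∈ nthRootsFinset N (1 : K), (ζ ^ j)⁻¹ * f (ζ * z)

theorem multisection_mul_of_mem_nthRootsFinset {N j : ℕ} (f : K → K) {η : K}
    (hη : η ∈ nthRootsFinset N (1 : K)) (z : K) :
    multisection N j f (η * z) = multisection N j f z := by
  unfold multisection
  conv_rhs => rw [← sum_nthRootsFinset_mul_right hη]
  simp_rw [mul_sum]
  exact sum_congr rfl fun ζ _ => by rw [mul_assoc ζ η z]; ring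

theorem multisection_eq_of_pow_eq {N j : ℕ} (f : K → K) {u v : K} (huv : u ^ N = v ^ N) :
    multisection N j f u = multisection N j f v := by
  rcases eq_or_ne N 0 with rfl | hN
  · simp [multisection]
  rcases eq_or_ne v 0 with rfl | hv
  · rw [(pow_eq_zero_iff hN).1 (huv.trans (zero_pow hN))]
  have hroot : u / v ∈ nthRootsFinset N (1 : K) := by
    rw [mem_nthRootsFinset (Nat.pos_of_ne_zero hN), div_pow, huv, div_self (pow_ne_zero N hv)]
  rw [← multisection_mul_of_mem_nthRootsFinset f hroot v, div_mul_cancel₀ u hv]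

theorem hasSum_multisection [TopologicalSpace K] [IsTopologicalRing K] {N j : ℕ} {ω : K}
    (hω : IsPrimitiveRoot ω N) (hj : j < N) {a : ℕ → K} {f : K → K} {z : K} (hz : z ≠ 0)
    (hf : ∀ ζ ∈ nthRootsFinset N (1 : K), HasSum (fun n => a n * (ζ * z) ^ n) (f (ζ * z))) :
    HasSum (fun m => a (N * m + j) * (z ^ N) ^ m) (multisection N j f z) := by
  have : NeZero N := ⟨((Nat.zero_le j).trans_lt hj).ne'⟩
  have : NeZero (N : K) := hω.neZero'
  have hsum : HasSum (fun n => ∑ ζ ∈ nthRootsFinset N (1 : K),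
      (N : K)⁻¹ * (z ^ j)⁻¹ * ((ζ ^ j)⁻¹ * (a n * (ζ * z) ^ n))) (multisection N j f z) := by
    rw [multisection, mul_sum]
    exact hasSum_sum fun ζ hζ => ((hf ζ hζ).mul_left _).mul_left _
  have hterm : ∀ n, ∑ ζ ∈ nthRootsFinset N (1 : K),
      (N : K)⁻¹ * (z ^ j)⁻¹ * ((ζ ^ j)⁻¹ * (a n * (ζ * z) ^ n)) =
      if n ≡ j [MOD N] then a n * z ^ n * (z ^ j)⁻¹ else 0 := fun n => by
    calc _ = (N : K)⁻¹ * (z ^ j)⁻¹ * a n * z ^ n *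
          ∑ ζ ∈ nthRootsFinset N (1 : K), ζ ^ n * (ζ ^ j)⁻¹ := by
          rw [mul_sum]; exact sum_congr rfl fun ζ _ => by ring
      _ = _ := by
          rw [hω.sum_nthRootsFinset_pow_mul_inv_pow]
          split_ifs
          · field_simp [NeZero.ne (N : K)]
          · rw [mul_zero]
  simp_rw [hterm, hasSum_ite_modEq_iff hj] at hsum
  convert hsum using 2 with m
  rw [pow_add, pow_mul, ← mul_assoc, mul_inv_cancel_right₀ (pow_ne_zero j hz)]

theorem analyticAt_multisection {𝕜 : Type*} [NontriviallyNormedField 𝕜] {N j : ℕ} {f : 𝕜 → 𝕜}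
    {z : 𝕜} (hz : z ≠ 0) (hf : ∀ ζ ∈ nthRootsFinset N (1 : 𝕜), AnalyticAt 𝕜 f (ζ * z)) :
    AnalyticAt 𝕜 (multisection N j f) z := by
  refine (analyticAt_const.mul ((analyticAt_id.pow j).inv (pow_ne_zero j hz))).mul ?_
  exact Finset.analyticAt_fun_sum _ fun ζ hζ =>
    analyticAt_const.mul ((hf ζ hζ).comp (analyticAt_const.mul analyticAt_id))

end RootsOfUnity

namespace Complex

theorem analyticAt_comp_cpow_nat_inv {F : ℂ → ℂ} {N : ℕ} (hN : N ≠ 0)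
    (hF : ∀ u v : ℂ, u ^ N = v ^ N → F u = F v) {w : ℂ} (hw : w ≠ 0)
    (hFw : AnalyticAt ℂ F (w ^ (N⁻¹ : ℂ))) : AnalyticAt ℂ (fun x => F (x ^ (N⁻¹ : ℂ))) w := by
  -- a branch of the `N`-th root that is analytic at `w` even when `w` lies on the branch cut
  let σ : ℂ → ℂ := fun x => w ^ (N⁻¹ : ℂ) * (x / w) ^ (N⁻¹ : ℂ)
  have hσ : AnalyticAt ℂ σ w := analyticAt_const.mul <|
    (analyticAt_id.div analyticAt_const hw).cpow analyticAt_const (by simp [hw])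
  have hσw : σ w = w ^ (N⁻¹ : ℂ) := by simp [σ, hw]
  have hσ_pow : ∀ x, σ x ^ N = x := fun x => by
    rw [mul_pow, cpow_nat_inv_pow _ hN, cpow_nat_inv_pow _ hN, mul_div_cancel₀ x hw]
  have hcomp : (fun x => F (x ^ (N⁻¹ : ℂ))) = F ∘ σ :=
    funext fun x => hF _ _ (by rw [cpow_nat_inv_pow x hN, hσ_pow])
  rw [hcomp]
  exact (hσw ▸ hFw).comp hσ

/-- `multisection N j f` as a function of `w = z ^ N`, set to `c` at `w = 0`, where
`multisection` only has a junk value. -/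
noncomputable def descendedMultisection (N j : ℕ) (f : ℂ → ℂ) (c : ℂ) : ℂ → ℂ :=
  Function.update (fun w => multisection N j f (w ^ (N⁻¹ : ℂ))) 0 c

theorem descendedMultisection_zero (N j : ℕ) (f : ℂ → ℂ) (c : ℂ) :
    descendedMultisection N j f c 0 = c :=
  Function.update_self _ _ _

theorem descendedMultisection_of_ne_zero (N j : ℕ) (f : ℂ → ℂ) (c : ℂ) {w : ℂ} (hw : w ≠ 0) :
    descendedMultisection N j f c w = multisection N j f (w ^ (N⁻¹ : ℂ)) :=
  Function.update_of_ne hw _ _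

theorem hasSum_descendedMultisection {N j : ℕ} (hj : j < N) {a : ℕ → ℂ} {f : ℂ → ℂ} {r : ℝ}
    (hr : 0 ≤ r) (hf : ∀ z : ℂ, ‖z‖ < r → HasSum (fun n => a n * z ^ n) (f z)) {w : ℂ}
    (hw : ‖w‖ < r ^ N) :
    HasSum (fun m => a (N * m + j) * w ^ m) (descendedMultisection N j f (a j) w) := by
  have hN : N ≠ 0 := ((Nat.zero_le j).trans_lt hj).ne'
  rcases eq_or_ne w 0 with rfl | hw0
  · rw [descendedMultisection_zero]
    convert hasSum_single (f := fun m => a (N * m + j) * (0 : ℂ) ^ m) 0 fun m hm => by simp [hm]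
    simp
  rw [descendedMultisection_of_ne_zero N j f _ hw0]
  have hzN : (w ^ (N⁻¹ : ℂ)) ^ N = w := cpow_nat_inv_pow w hN
  generalize w ^ (N⁻¹ : ℂ) = z at hzN ⊢
  subst hzN
  have hz : z ≠ 0 := fun hz => hw0 (by rw [hz, zero_pow hN])
  have hzr : ‖z‖ < r := by
    rw [norm_pow] at hw
    exact (pow_lt_pow_iff_left₀ (norm_nonneg z) hr hN).1 hw
  refine hasSum_multisection (isPrimitiveRoot_exp N hN) hj hz fun ζ hζ => hf _ ?_
  have hζN : ζ ^ N = 1 := (mem_nthRootsFinset (Nat.pos_of_ne_zero hN) 1).1 hζ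
  rwa [norm_mul, norm_eq_one_of_pow_eq_one hζN hN, one_mul]

theorem analyticAt_descendedMultisection {N : ℕ} (hN : N ≠ 0) (j : ℕ) {f : ℂ → ℂ} (c : ℂ)
    {w : ℂ} (hw : w ≠ 0) (hf : ∀ z : ℂ, z ^ N = w → AnalyticAt ℂ f z) :
    AnalyticAt ℂ (descendedMultisection N j f c) w := by
  have hzN : (w ^ (N⁻¹ : ℂ)) ^ N = w := cpow_nat_inv_pow w hN
  have hz : w ^ (N⁻¹ : ℂ) ≠ 0 := fun hz => hw (by rw [← hzN, hz, zero_pow hN])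
  have hanalytic := analyticAt_comp_cpow_nat_inv hN (fun _ _ => multisection_eq_of_pow_eq f) hw
    (analyticAt_multisection (j := j) hz fun ζ hζ => hf _ ?_)
  · refine hanalytic.congr ?_
    filter_upwards [eventually_ne_nhds hw] with x hx
    exact (descendedMultisection_of_ne_zero N j f c hx).symm
  · rw [mul_pow, (mem_nthRootsFinset (Nat.pos_of_ne_zero hN) 1).1 hζ, one_mul, hzN]

end Complex

/-- Suppose `G(z) = ∑_{n≥0} g(n) zⁿ` has positive radius of convergence and
extends to a function analytic off a finite set `S` of roots of unity. Then there is
`N ≥ 1` such that for each `0 ≤ j < N`, the section `G_j(z) = ∑_{n≥0} g(Nn+j) zⁿ` extends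
to a function analytic off `{1}`. -/
theorem sections_singular_only_at_one
    (g : ℕ → ℂ) (S : Finset ℂ)
    (hS : ∀ ζ ∈ S, ∃ m : ℕ, 1 ≤ m ∧ ζ ^ m = 1)
    (h : ℂ → ℂ)
    (hanalytic : ∀ z : ℂ, z ∉ (S : Set ℂ) → AnalyticAt ℂ h z)
    (hagree : ∃ r : ℝ, 0 < r ∧ ∀ z : ℂ, ‖z‖ < r →
      HasSum (fun n : ℕ => g n * z ^ n) (h z)) :
    ∃ N : ℕ, 1 ≤ N ∧ ∀ j : ℕ, j < N →
      ∃ hj : ℂ → ℂ, (∀ z : ℂ, z ≠ 1 → AnalyticAt ℂ hj z) ∧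
        ∃ r : ℝ, 0 < r ∧ ∀ z : ℂ, ‖z‖ < r →
          HasSum (fun n : ℕ => g (N * n + j) * z ^ n) (hj z) := by
  obtain ⟨r, hr, hG⟩ := hagree
  obtain ⟨N, hN, hSN⟩ := S.exists_pos_forall_pow_eq_one hS
  have hsum : ∀ j < N, ∀ w : ℂ, ‖w‖ < r ^ N →
      HasSum (fun n => g (N * n + j) * w ^ n) (Complex.descendedMultisection N j h (g j) w) :=
    fun _ hj _ => Complex.hasSum_descendedMultisection hj hr.le hG
  refine ⟨N, hN, fun j hj => ⟨Complex.descendedMultisection N j h (g j), fun w hw => ?_,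
    r ^ N, pow_pos hr N, hsum j hj⟩⟩
  rcases eq_or_ne w 0 with rfl | hw0
  · exact analyticAt_zero_of_hasSum_mul_pow (pow_pos hr N) (hsum j hj)
  · exact Complex.analyticAt_descendedMultisection (by omega) j (g j) hw0
      fun z hz => hanalytic z fun hzS => hw (hz ▸ hSN z hzS)
end

section
/- Let ω : ℕ≥1 → ℂ be a multiplicative function that is periodic with period M (ω(n+M) = ω(n) for all n ≥ 1) and not identically zero, and let p be a prime that does not divide M. Then |ω(p)| = 1. -/
/-!
Complete multiplicativity on integers prime to `M`: if `a` is prime to `M`, then for any `b`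
the Chinese remainder theorem gives `m ≡ b [MOD M]` with `m` prime to `a`, so periodicity and
multiplicativity give `ω (a * b) = ω (a * m) = ω a * ω m = ω a * ω b`. Hence
`ω p ^ φ M = ω (p ^ φ M) = ω 1 = 1` by Euler's theorem, and `‖ω p‖ = 1`.
-/

theorem eq_of_modEq_of_periodic_on_pos {α : Type*} {ω : ℕ → α} {M : ℕ}
    (hper : ∀ n : ℕ, 1 ≤ n → ω (n + M) = ω n)
    {a b : ℕ} (ha : 1 ≤ a) (hb : 1 ≤ b) (hab : a ≡ b [MOD M]) : ω a = ω b := by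
  have hshift : Function.Periodic (fun n ↦ ω (n + 1)) M := fun n ↦ by
    simpa only [add_right_comm] using hper (n + 1) (Nat.le_add_left 1 n)
  obtain ⟨a, rfl⟩ : ∃ a', a = a' + 1 := ⟨a - 1, by omega⟩
  obtain ⟨b, rfl⟩ : ∃ b', b = b' + 1 := ⟨b - 1, by omega⟩
  have hmod : a % M = b % M := Nat.ModEq.add_right_cancel' 1 hab
  calc ω (a + 1) = ω (a % M + 1) := (hshift.map_mod_nat a).symm
    _ = ω (b + 1) := by rw [hmod]; exact hshift.map_mod_nat b

theorem Nat.exists_pos_modEq_coprime {M a : ℕ} (hM : 0 < M) (ha : 0 < a) (haM : a.Coprime M)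
    (b : ℕ) : ∃ m, 0 < m ∧ m ≡ b [MOD M] ∧ a.Coprime m := by
  obtain ⟨x, hxM, hxa⟩ := Nat.chineseRemainder haM.symm b 1
  refine ⟨x + M * a, by positivity, ?_, ?_⟩
  · exact (Nat.add_mul_mod_self_left x M a).trans hxM
  · have hone : x + M * a ≡ 1 [MOD a] := (Nat.add_mul_mod_self_right x M a).trans hxa
    simp [Nat.Coprime, Nat.gcd_comm a, hone.gcd_eq]

section MultiplicativePeriodic

variable {R : Type*} [Monoid R] {ω : ℕ → R} {M : ℕ}

theorem map_mul_of_coprime_modulus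
    (hωmul : ∀ m n : ℕ, 0 < m → 0 < n → Nat.Coprime m n → ω (m * n) = ω m * ω n)
    (hper : ∀ n : ℕ, 1 ≤ n → ω (n + M) = ω n) (hM : 0 < M) {a b : ℕ} (ha : 0 < a) (hb : 0 < b)
    (haM : a.Coprime M) : ω (a * b) = ω a * ω b := by
  obtain ⟨m, hm, hmb, ham⟩ := Nat.exists_pos_modEq_coprime hM ha haM b
  calc ω (a * b) = ω (a * m) :=
        eq_of_modEq_of_periodic_on_pos hper (Nat.mul_pos ha hb) (Nat.mul_pos ha hm)
          (hmb.mul_left a).symm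
    _ = ω a * ω m := hωmul a m ha hm ham
    _ = ω a * ω b := by rw [eq_of_modEq_of_periodic_on_pos hper hm hb hmb]

theorem map_pow_of_coprime_modulus
    (hωmul : ∀ m n : ℕ, 0 < m → 0 < n → Nat.Coprime m n → ω (m * n) = ω m * ω n)
    (hper : ∀ n : ℕ, 1 ≤ n → ω (n + M) = ω n) (hω1 : ω 1 = 1) (hM : 0 < M) {a : ℕ} (ha : 0 < a)
    (haM : a.Coprime M) (k : ℕ) : ω (a ^ k) = ω a ^ k := by
  induction k with
  | zero => simp [hω1]
  | succ k ih =>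
    rw [pow_succ', map_mul_of_coprime_modulus hωmul hper hM ha (by positivity) haM, ih, pow_succ']

end MultiplicativePeriodic

theorem periodic_multiplicative_abs_one_at_primes_general
    (ω : ℕ → ℂ) (M : ℕ)
    (hω1 : ω 1 = 1)
    (hωmul : ∀ m n : ℕ, 0 < m → 0 < n → Nat.Coprime m n → ω (m * n) = ω m * ω n)
    (hper : ∀ n : ℕ, 1 ≤ n → ω (n + M) = ω n)
    (p : ℕ) (hp : p.Prime) (hpM : ¬ p ∣ M) :
    ‖ω p‖ = 1 := by
  have hM : 0 < M := Nat.pos_of_ne_zero fun h ↦ hpM (h ▸ dvd_zero p)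
  have hpM' : p.Coprime M := (Nat.Prime.coprime_iff_not_dvd hp).mpr hpM
  have hpow : ω p ^ M.totient = 1 := by
    rw [← map_pow_of_coprime_modulus hωmul hper hω1 hM hp.pos hpM',
      eq_of_modEq_of_periodic_on_pos hper (Nat.one_le_pow _ _ hp.pos) le_rfl
        (Nat.ModEq.pow_totient hpM'), hω1]
  have hnorm : ‖ω p‖ ^ M.totient = 1 := by rw [← norm_pow, hpow, norm_one]
  exact (pow_eq_one_iff_of_nonneg (norm_nonneg _) (Nat.totient_pos.mpr hM).ne').mp hnorm

/-- If `ω : ℕ≥1 → ℂ` is multiplicative, periodic with period `M`, not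
identically zero, and `p` is a prime not dividing `M`, then `|ω(p)| = 1`. -/
theorem periodic_multiplicative_abs_one_at_primes
    (ω : ℕ → ℂ) (M : ℕ) (hM : 1 ≤ M)
    (hω1 : ω 1 = 1)
    (hωmul : ∀ m n : ℕ, 0 < m → 0 < n → Nat.Coprime m n → ω (m * n) = ω m * ω n)
    (hper : ∀ n : ℕ, 1 ≤ n → ω (n + M) = ω n)
    (hne : ∃ m : ℕ, 1 ≤ m ∧ ω m ≠ 0)
    (p : ℕ) (hp : p.Prime) (hpM : ¬ p ∣ M) :
    ‖ω p‖ = 1 :=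
  periodic_multiplicative_abs_one_at_primes_general ω M hω1 hωmul hper p hp hpM
end

section
/- (Bézivin) Let f : ℕ≥1 → ℂ be a multiplicative function satisfying a polynomial recurrence ∑_{i=0}^t P_i(n)·f(n+i) = 0 for all n ≥ 1, where P_0, …, P_t ∈ ℂ[x] and P_t ≠ 0. Set N = (2t+1)!. Then for every positive integer q coprime to N, there exists n₀ such that f(nq) = f(n)·f(q) for all n ≥ n₀. -/
/-!
Let rational functions act on germs at infinity of sequences by evaluation at `n`. The
recurrence shows that the germs of all the sequences `n ↦ f (n * q + k)` lie in the
`K(X)`-span of the first `t` of them. Hence the `2t + 1` shifts of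
`H m = f (m * q) - f q * f m` lie in a space of dimension at most `2t`, so `H` satisfies a
polynomial recurrence of some order `d ≤ 2t`: for large `n`, `H (n + d)` vanishes as soon as
`H n, …, H (n + d - 1)` do. Multiplicativity gives `H m = 0` for `m` coprime to `q`, and as
every prime factor of `q` exceeds `2t + 1`, the window `q N + 1, …, q N + d` consists of such
`m`; from there the zeros propagate to every `m > q N`.
-/

open Filter Polynomial

theorem Polynomial.comp_X_mul_C_add_C_ne_zero {R : Type*} [Semiring R] [NoZeroDivisors R]
    {p : R[X]} (hp : p ≠ 0) {a : R} (ha : a ≠ 0) (b : R) :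
    p.comp (X * C a + C b) ≠ 0 := by
  rw [Ne, comp_eq_zero_iff, not_or]
  refine ⟨hp, fun ⟨_, h⟩ => ha ?_⟩
  simpa using congrArg (coeff · 1) h

theorem Polynomial.eventually_eval_natCast_ne_zero {R : Type*} [CommRing R] [IsDomain R]
    [CharZero R] {p : R[X]} (hp : p ≠ 0) :
    ∀ᶠ n : ℕ in atTop, p.eval (n : R) ≠ 0 := by
  have hroots : {n : ℕ | p.eval (n : R) = 0}.Finite :=
    (p.finite_setOfPred_isRoot hp).preimage Nat.cast_injective.injOn
  simpa [Nat.cofinite_eq_atTop] using hroots.eventually_cofinite_notMem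

namespace Bezivin

theorem exists_zero_propagation {R : Type*} [CommRing R] [IsDomain R] [CharZero R] {H : ℕ → R}
    {m : ℕ} {Q : ℕ → R[X]} (hQ : ∃ j ≤ m, Q j ≠ 0)
    (hrec : ∀ᶠ n : ℕ in atTop,
      ∑ j ∈ Finset.range (m + 1), (Q j).eval (n : R) * H (n + j) = 0) :
    ∃ d ≤ m, ∃ N, ∀ n ≥ N, (∀ j < d, H (n + j) = 0) → H (n + d) = 0 := by
  classical
  set d := Nat.findGreatest (fun j => Q j ≠ 0) m
  obtain ⟨j, hjm, hj⟩ := hQ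
  have hd : Q d ≠ 0 := Nat.findGreatest_spec (P := fun j => Q j ≠ 0) hjm hj
  have hdm : d ≤ m := Nat.findGreatest_le m
  obtain ⟨N, hN⟩ := eventually_atTop.mp (hrec.and (eventually_eval_natCast_ne_zero hd))
  refine ⟨d, hdm, N, fun n hn hzero => ?_⟩
  obtain ⟨hsum, hQn⟩ := hN n hn
  rwa [Finset.sum_eq_single_of_mem d (Finset.mem_range_succ_iff.mpr hdm) fun j hj hjd => ?_,
    mul_eq_zero, or_iff_right hQn] at hsum
  rcases lt_or_gt_of_ne hjd with hlt | hgt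
  · rw [hzero j hlt, mul_zero]
  · rw [not_not.mp (Nat.findGreatest_is_greatest hgt (Finset.mem_range_succ_iff.mp hj)),
      eval_zero, zero_mul]

theorem eq_zero_of_coprime_of_zero_propagation {M : Type*} [Zero M] {H : ℕ → M} {q d N : ℕ}
    (hq : 0 < q) (hprime : ∀ p, p.Prime → p ∣ q → d < p)
    (hcop : ∀ m, 0 < m → m.Coprime q → H m = 0)
    (hprop : ∀ n ≥ N, (∀ j < d, H (n + j) = 0) → H (n + d) = 0) :
    ∀ m ≥ q * N + 1, H m = 0 := by
  have hwindow : ∀ j < d, (q * N + 1 + j).Coprime q := fun j hj => by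
    rw [add_assoc, Nat.coprime_mul_left_add_left]
    refine Nat.coprime_of_dvd fun p hp hpj hpq => ?_
    have := Nat.le_of_dvd (by omega) hpj
    have := hprime p hp hpq
    omega
  have hNq : N ≤ q * N := Nat.le_mul_of_pos_left N hq
  intro m hm
  induction m using Nat.strong_induction_on with
  | _ m ih =>
  by_cases hmq : m.Coprime q
  · exact hcop m (by omega) hmq
  have hmd : q * N + 1 + d ≤ m := by
    by_contra! h
    have := hwindow (m - (q * N + 1)) (by omega)
    rw [show q * N + 1 + (m - (q * N + 1)) = m by omega] at this
    exact hmq this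
  obtain ⟨n, rfl⟩ := Nat.exists_eq_add_of_le' (le_of_add_le_right hmd)
  exact hprop n (by omega) fun j hj => ih (n + j) (by omega) (by omega)

noncomputable section

variable {K : Type*} [Field K]

local notation "𝓖" => Filter.Germ (atTop : Filter ℕ) K

variable (K) in
def natEvalGerm : K[X] →+* 𝓖 :=
  (Germ.coeRingHom _).comp (RingHom.pi fun n : ℕ => evalRingHom (n : K))

instance : Module K[X] 𝓖 := Module.compHom _ (natEvalGerm K)

theorem polynomial_smul_coe (p : K[X]) (u : ℕ → K) :
    p • (u : 𝓖) = ↑(fun n : ℕ => p.eval (n : K) * u n) := rfl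

theorem sum_smul_coe {ι : Type*} (s : Finset ι) (Q : ι → K[X]) (u : ι → ℕ → K) :
    ∑ i ∈ s, Q i • (u i : 𝓖) =
      ↑(fun n : ℕ => ∑ i ∈ s, (Q i).eval (n : K) * u i n) := by
  simp only [polynomial_smul_coe]
  exact (map_sum (Germ.coeRingHom atTop) _ s).symm.trans (congrArg _ (by ext; simp))

variable [CharZero K]

theorem isUnit_natEvalGerm {p : K[X]} (hp : p ≠ 0) : IsUnit (natEvalGerm K p) := by
  refine .of_mul_eq_one (↑(fun n : ℕ => (p.eval (n : K))⁻¹) : 𝓖) (Germ.coe_eq.mpr ?_)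
  filter_upwards [eventually_eval_natCast_ne_zero hp] with n hn
  exact mul_inv_cancel₀ hn

variable (K) in
def ratFuncGerm : RatFunc K →+* 𝓖 :=
  IsLocalization.lift (M := nonZeroDivisors K[X]) fun p =>
    isUnit_natEvalGerm (nonZeroDivisors.ne_zero p.prop)

instance : Module (RatFunc K) 𝓖 := Module.compHom _ (ratFuncGerm K)

instance : IsScalarTower K[X] (RatFunc K) 𝓖 where
  smul_assoc p c v := by
    rw [Algebra.smul_def]
    change ratFuncGerm K (algebraMap K[X] (RatFunc K) p * c) * v =
      natEvalGerm K p * (ratFuncGerm K c * v)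
    rw [map_mul, ratFuncGerm, IsLocalization.lift_eq, mul_assoc]

theorem coe_mul_add_mem_span {u : ℕ → K} {t : ℕ} {P : ℕ → K[X]} (hPt : P t ≠ 0)
    (hrec : ∀ n : ℕ, 1 ≤ n →
      ∑ i ∈ Finset.range (t + 1), (P i).eval (n : K) * u (n + i) = 0)
    {q : ℕ} (hq : 0 < q) (k : ℕ) :
    (↑(fun n : ℕ => u (n * q + k)) : 𝓖) ∈
      Submodule.span (RatFunc K)
        (Set.range fun i : Fin t => (↑(fun n : ℕ => u (n * q + i)) : 𝓖)) := by
  induction k using Nat.strong_induction_on with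
  | _ k ih =>
  rcases lt_or_ge k t with hk | hk
  · exact Submodule.subset_span ⟨⟨k, hk⟩, rfl⟩
  obtain ⟨a, rfl⟩ := Nat.exists_eq_add_of_le' hk
  set w : ℕ → 𝓖 := fun k => ↑(fun n : ℕ => u (n * q + k))
  set R : ℕ → K[X] := fun i => (P i).comp (X * C (q : K) + C (a : K))
  have hR : algebraMap K[X] (RatFunc K) (R t) ≠ 0 :=
    RatFunc.algebraMap_ne_zero (comp_X_mul_C_add_C_ne_zero hPt (by exact_mod_cast hq.ne') _)
  have hrel : ∑ i ∈ Finset.range (t + 1), R i • w (a + i) = 0 := by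
    rw [sum_smul_coe, ← Germ.coe_zero, Germ.coe_eq]
    filter_upwards [eventually_ge_atTop 1] with n hn
    have hnq : 1 ≤ n * q + a := le_add_right (Nat.mul_pos hn hq)
    simpa [R, add_assoc] using hrec (n * q + a) hnq
  rw [Finset.sum_range_succ, add_eq_zero_iff_eq_neg'] at hrel
  have hw : w (a + t) = (algebraMap K[X] (RatFunc K) (R t))⁻¹ • (R t • w (a + t)) := by
    rw [← algebraMap_smul (RatFunc K) (R t) (w (a + t)), smul_smul, inv_mul_cancel₀ hR,
      one_smul]
  change w (a + t) ∈ _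
  rw [hw, hrel]
  refine Submodule.smul_mem _ _ (Submodule.neg_mem _ (Submodule.sum_mem _ fun i hi => ?_))
  exact Submodule.smul_of_tower_mem _ _ (ih _ (by have := Finset.mem_range.mp hi; omega))

theorem exists_polynomial_recurrence_of_mem_span {ι : Type*} [Fintype ι] {b : ι → 𝓖}
    {H : ℕ → K}
    (hH : ∀ j, (↑(fun n : ℕ => H (n + j)) : 𝓖) ∈
      Submodule.span (RatFunc K) (Set.range b)) :
    ∃ Q : ℕ → K[X], (∃ j ≤ Fintype.card ι, Q j ≠ 0) ∧ ∀ᶠ n : ℕ in atTop,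
      ∑ j ∈ Finset.range (Fintype.card ι + 1), (Q j).eval (n : K) * H (n + j) = 0 := by
  classical
  set m := Fintype.card ι
  set v : Fin (m + 1) → 𝓖 := fun j => ↑(fun n : ℕ => H (n + j))
  have hdep : ¬ LinearIndependent K[X] v := by
    rw [LinearIndependent.iff_fractionRing K[X] (RatFunc K)]
    intro hli
    have hle := linearIndependent_le_span' v hli (Set.range b)
      (Set.range_subset_iff.mpr fun j => hH j)
    rw [Cardinal.mk_fin, Nat.cast_le] at hle
    have := Fintype.card_range_le b
    omega
  obtain ⟨g, hg, j, hj⟩ := Fintype.not_linearIndependent_iff.mp hdep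
  refine ⟨fun j => if h : j < m + 1 then g ⟨j, h⟩ else 0,
    ⟨j, Fin.is_le j, by simpa [Fin.is_le j] using hj⟩, ?_⟩
  rw [sum_smul_coe, ← Germ.coe_zero, Germ.coe_eq] at hg
  filter_upwards [hg] with n hn
  rw [← Fin.sum_univ_eq_sum_range]
  simpa [Fin.is_le] using hn

theorem coe_shift_mul_sub_mem_span {u : ℕ → K} {t : ℕ} {P : ℕ → K[X]} (hPt : P t ≠ 0)
    (hrec : ∀ n : ℕ, 1 ≤ n →
      ∑ i ∈ Finset.range (t + 1), (P i).eval (n : K) * u (n + i) = 0)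
    {q : ℕ} (hq : 0 < q) (c : K) (j : ℕ) :
    (↑(fun n : ℕ => u ((n + j) * q) - c * u (n + j)) : 𝓖) ∈ Submodule.span (RatFunc K)
      (Set.range (Sum.elim (fun i : Fin t => (↑(fun n : ℕ => u (n * q + i)) : 𝓖))
        fun i : Fin t => ↑(fun n : ℕ => u (n + i)))) := by
  have hsplit : (↑(fun n : ℕ => u ((n + j) * q) - c * u (n + j)) : 𝓖) =
      ↑(fun n : ℕ => u (n * q + j * q)) - C c • ↑(fun n : ℕ => u (n * 1 + j)) := by
    rw [polynomial_smul_coe, ← Germ.coe_sub]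
    congr 1
    ext n
    simp [add_mul]
  rw [hsplit]
  refine Submodule.sub_mem _
    (Submodule.span_mono (Set.range_comp_subset_range Sum.inl _)
      (coe_mul_add_mem_span hPt hrec hq (j * q)))
    (Submodule.smul_of_tower_mem _ _
      (Submodule.span_mono ?_ (coe_mul_add_mem_span hPt hrec one_pos j)))
  rintro _ ⟨i, rfl⟩
  exact ⟨Sum.inr i, by simp⟩

end

end Bezivin

open Bezivin

theorem bezivin_eventual_multiplicativity_general
    (f : ℕ → ℂ)
    (hfmul : ∀ m n : ℕ, 0 < m → 0 < n → Nat.Coprime m n → f (m * n) = f m * f n)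
    (t : ℕ) (P : ℕ → Polynomial ℂ) (hPt : P t ≠ 0)
    (hrec : ∀ n : ℕ, 1 ≤ n →
      ∑ i ∈ Finset.range (t + 1), (P i).eval (n : ℂ) * f (n + i) = 0) :
    ∀ q : ℕ, 1 ≤ q → Nat.Coprime q (Nat.factorial (2 * t + 1)) →
      ∃ n₀ : ℕ, ∀ n : ℕ, n₀ ≤ n → f (n * q) = f n * f q := by
  intro q hq hcop
  have hprime : ∀ p, p.Prime → p ∣ q → t + t < p := fun p hp hpq => by
    by_contra! hle
    exact hp.one_lt.ne' (Nat.eq_one_of_dvd_coprimes hcop hpq (hp.dvd_factorial.mpr (by omega)))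
  set H : ℕ → ℂ := fun m => f (m * q) - f q * f m
  obtain ⟨Q, hQ, hQrec⟩ := exists_polynomial_recurrence_of_mem_span (H := H)
    (coe_shift_mul_sub_mem_span hPt hrec hq (f q))
  obtain ⟨d, hd, N, hprop⟩ := exists_zero_propagation (H := H) hQ hQrec
  rw [Fintype.card_sum, Fintype.card_fin] at hd
  have hmul : ∀ m, 0 < m → m.Coprime q → f (m * q) - f q * f m = 0 := fun m hm hmq => by
    rw [hfmul m q hm hq hmq, mul_comm, sub_self]
  refine ⟨q * N + 1, fun n hn => ?_⟩
  have := eq_zero_of_coprime_of_zero_propagation hq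
    (fun p hp hpq => hd.trans_lt (hprime p hp hpq)) hmul hprop n hn
  rw [sub_eq_zero.mp this, mul_comm]

/-- Bézivin: Let `f : ℕ≥1 → ℂ` be multiplicative satisfying
`∑_{i=0}^t P_i(n) f(n+i) = 0` for all `n ≥ 1` with `P_t ≠ 0`, and set `N = (2t+1)!`.
Then for every `q ≥ 1` coprime to `N` there is `n₀` with `f(nq) = f(n) f(q)` for all
`n ≥ n₀`. -/
theorem bezivin_eventual_multiplicativity
    (f : ℕ → ℂ)
    (hf1 : f 1 = 1)
    (hfmul : ∀ m n : ℕ, 0 < m → 0 < n → Nat.Coprime m n → f (m * n) = f m * f n)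
    (t : ℕ) (P : ℕ → Polynomial ℂ) (hPt : P t ≠ 0)
    (hrec : ∀ n : ℕ, 1 ≤ n →
      ∑ i ∈ Finset.range (t + 1), (P i).eval (n : ℂ) * f (n + i) = 0) :
    ∀ q : ℕ, 1 ≤ q → Nat.Coprime q (Nat.factorial (2 * t + 1)) →
      ∃ n₀ : ℕ, ∀ n : ℕ, n₀ ≤ n → f (n * q) = f n * f q :=
  bezivin_eventual_multiplicativity_general f hfmul t P hPt hrec
end

section
/- (Bézivin) Let f : ℕ≥1 → ℂ be a multiplicative P-recursive sequence that is not eventually zero (i.e., for every N there exists n ≥ N with f(n) ≠ 0). Then there is a constant P₀ such that f(p^k) ≠ 0 for every prime p ≥ P₀ and every natural number k ≥ 1. -/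
/-- Iterated Chinese Remainder Theorem for pairwise coprime moduli. -/
lemma crt_aux (s r : ℕ → ℕ) :
    ∀ t : ℕ, (∀ i j, i < t → j < t → i ≠ j → Nat.Coprime (s i) (s j)) →
      ∃ n : ℕ, ∀ i < t, n ≡ r i [MOD s i] := by
  intro t
  induction t with
  | zero => exact fun _ => ⟨0, fun i hi => absurd hi (Nat.not_lt_zero i)⟩
  | succ t ih =>
    intro hco
    obtain ⟨n, hn⟩ := ih (fun i j hi hj hij =>
      hco i j (hi.trans (Nat.lt_succ_self t)) (hj.trans (Nat.lt_succ_self t)) hij)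
    have hcop : Nat.Coprime (∏ i ∈ Finset.range t, s i) (s t) :=
      Nat.Coprime.prod_left (fun i hi =>
        hco i t ((Finset.mem_range.mp hi).trans (Nat.lt_succ_self t)) (Nat.lt_succ_self t)
          (Nat.ne_of_lt (Finset.mem_range.mp hi)))
    obtain ⟨m, hm1, hm2⟩ := Nat.chineseRemainder hcop n (r t)
    refine ⟨m, fun i hi => ?_⟩
    rcases Nat.lt_succ_iff_lt_or_eq.mp hi with hi' | hi'
    · exact (Nat.ModEq.of_dvd (Finset.dvd_prod_of_mem s (Finset.mem_range.mpr hi')) hm1).trans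
        (hn i hi')
    · subst hi'; exact hm2

/-- A nonzero polynomial over `ℂ` is eventually nonzero on the naturals. -/
lemma poly_eventually_ne (P : Polynomial ℂ) (hP : P ≠ 0) :
    ∃ M : ℕ, ∀ n : ℕ, M ≤ n → P.eval (n : ℂ) ≠ 0 := by
  have hfin : {x : ℂ | P.IsRoot x}.Finite := Polynomial.finite_setOf_isRoot hP
  have hfin' : {n : ℕ | P.eval (n : ℂ) = 0}.Finite := by
    have : {n : ℕ | P.eval (n : ℂ) = 0} = (fun n : ℕ => (n : ℂ)) ⁻¹' {x : ℂ | P.IsRoot x} := rfl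
    rw [this]
    exact Set.Finite.preimage (Set.injOn_of_injective Nat.cast_injective) hfin
  obtain ⟨M, hM⟩ := hfin'.bddAbove
  refine ⟨M + 1, fun n hn h => ?_⟩
  have := hM (Set.mem_setOf_eq ▸ h : n ∈ {n : ℕ | P.eval (n : ℂ) = 0})
  omega

/-- Bézivin: Let `f : ℕ≥1 → ℂ` be multiplicative and P-recursive, not
eventually zero. Then there is `P₀` such that `f(p^k) ≠ 0` for every prime `p ≥ P₀` and
every `k ≥ 1`. -/
theorem bezivin_nonvanishing_at_large_prime_powers
    (f : ℕ → ℂ)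
    (hf1 : f 1 = 1)
    (hfmul : ∀ m n : ℕ, 0 < m → 0 < n → Nat.Coprime m n → f (m * n) = f m * f n)
    (hrec : ∃ (t : ℕ) (P : ℕ → Polynomial ℂ), P t ≠ 0 ∧
      ∃ N : ℕ, ∀ n : ℕ, N ≤ n →
        ∑ i ∈ Finset.range (t + 1), (P i).eval (n : ℂ) * f (n + i) = 0)
    (hnz : ∀ N : ℕ, ∃ n : ℕ, N ≤ n ∧ f n ≠ 0) :
    ∃ P₀ : ℕ, ∀ p : ℕ, p.Prime → P₀ ≤ p → ∀ k : ℕ, 1 ≤ k → f (p ^ k) ≠ 0 := by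
  obtain ⟨t, P, hPt, N, hR⟩ := hrec
  by_contra hcon
  push_neg at hcon
  -- a choice function producing, for each bound B, a "bad" prime ≥ B
  have hc : ∀ B : ℕ, ∃ pk : ℕ × ℕ,
      pk.1.Prime ∧ B ≤ pk.1 ∧ 1 ≤ pk.2 ∧ f (pk.1 ^ pk.2) = 0 := by
    intro B
    obtain ⟨p, hp, hBp, k, hk, hfk⟩ := hcon B
    exact ⟨(p, k), hp, hBp, hk, hfk⟩
  choose c hc1 hc2 hc3 hc4 using hc
  -- a strictly increasing sequence of bad primes, all ≥ t + 1
  let b : ℕ → ℕ := fun j => Nat.rec (t + 1) (fun _ prev => (c prev).1 + 1) j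
  let p : ℕ → ℕ := fun j => (c (b j)).1
  let k : ℕ → ℕ := fun j => (c (b j)).2
  have hb0 : b 0 = t + 1 := rfl
  have hbs : ∀ j, b (j + 1) = p j + 1 := fun j => rfl
  have hpprime : ∀ j, (p j).Prime := fun j => hc1 (b j)
  have hpge : ∀ j, b j ≤ p j := fun j => hc2 (b j)
  have hkge : ∀ j, 1 ≤ k j := fun j => hc3 (b j)
  have hfz : ∀ j, f (p j ^ k j) = 0 := fun j => hc4 (b j)
  have hpmono : StrictMono p := by
    apply strictMono_nat_of_lt_succ
    intro j
    have := hpge (j + 1)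
    rw [hbs j] at this
    omega
  have hbmono : Monotone b := by
    apply monotone_nat_of_le_succ
    intro j
    rw [hbs j]
    have := hpge j
    omega
  have hptge : ∀ j, t + 1 ≤ p j := fun j => le_trans (hb0 ▸ hbmono (Nat.zero_le j)) (hpge j)
  -- CRT
  set s : ℕ → ℕ := fun i => p i ^ (k i + 1) with hs
  have hscop : ∀ i j, i < t → j < t → i ≠ j → Nat.Coprime (s i) (s j) := by
    intro i j _ _ hij
    exact Nat.Coprime.pow _ _ ((Nat.coprime_primes (hpprime i) (hpprime j)).mpr
      (fun h => hij (hpmono.injective h)))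
  obtain ⟨n, hn⟩ := crt_aux s (fun i => p i ^ k i - i) t hscop
  obtain ⟨M, hM⟩ := poly_eventually_ne (P t) hPt
  set Pr : ℕ := ∏ i ∈ Finset.range t, s i with hPr
  have hsipos : ∀ i, 0 < s i := fun i => pow_pos (hpprime i).pos _
  have hPrpos : 0 < Pr := Finset.prod_pos (fun i _ => hsipos i)
  set n₀ : ℕ := n + (N + M + 1) * Pr with hn₀
  have haux1 : N + M + 1 ≤ (N + M + 1) * Pr := Nat.le_mul_of_pos_right _ hPrpos
  have haux2 : Pr ≤ (N + M + 1) * Pr := Nat.le_mul_of_pos_left Pr (by omega)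
  have hn₀N : N ≤ n₀ := by omega
  have hn₀M : M ≤ n₀ := by omega
  have hn₀Pr : Pr ≤ n₀ := by omega
  -- n₀ satisfies the congruences
  have hn₀cong : ∀ i < t, n₀ ≡ p i ^ k i - i [MOD s i] := by
    intro i hi
    have hdvd : s i ∣ (N + M + 1) * Pr :=
      Dvd.dvd.mul_left (Finset.dvd_prod_of_mem s (Finset.mem_range.mpr hi)) _
    have h1 : (N + M + 1) * Pr ≡ 0 [MOD s i] := Nat.modEq_zero_iff_dvd.mpr hdvd
    have h2 : n₀ ≡ n + 0 [MOD s i] := Nat.ModEq.add_left n h1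
    simpa using h2.trans (hn i hi)
  -- window of t consecutive zeros at n₀
  have hwin : ∀ i < t, f (n₀ + i) = 0 := by
    intro i hi
    have hile : i ≤ p i ^ k i :=
      le_trans (by omega : i ≤ t + 1) (le_trans (hptge i) (Nat.le_self_pow (Nat.one_le_iff_ne_zero.mp (hkge i)) _))
    have hcong : n₀ + i ≡ p i ^ k i [MOD s i] := by
      have := Nat.ModEq.add_right i (hn₀cong i hi)
      rwa [Nat.sub_add_cancel hile] at this
    have hsle : s i ≤ Pr := Nat.le_of_dvd hPrpos (Finset.dvd_prod_of_mem s (Finset.mem_range.mpr hi))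
    have hpk_le : p i ^ k i ≤ n₀ + i := by
      have : p i ^ k i ≤ s i := Nat.pow_le_pow_right (hpprime i).pos (by omega)
      omega
    obtain ⟨cc, hcc⟩ := (Nat.modEq_iff_dvd' hpk_le).mp hcong.symm
    have heq : n₀ + i = p i ^ k i * (1 + p i * cc) := by
      have h3 : n₀ + i = p i ^ k i + s i * cc := by omega
      rw [h3, hs]
      ring
    have hcop : Nat.Coprime (p i ^ k i) (1 + p i * cc) := by
      apply Nat.Coprime.pow_left
      have := (Nat.coprime_add_mul_left_right (p i) 1 cc)
      simp only [mul_comm] at this ⊢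
      exact this.mpr (Nat.coprime_one_right (p i))
    rw [heq, hfmul _ _ (pow_pos (hpprime i).pos _) (by omega) hcop, hfz i, zero_mul]
  -- f vanishes from n₀ on
  have hzero : ∀ m : ℕ, n₀ ≤ m → f m = 0 := by
    intro m
    induction m using Nat.strong_induction_on with
    | _ m ih =>
      intro hm
      rcases lt_or_ge m (n₀ + t) with hlt | hge
      · have : m = n₀ + (m - n₀) := by omega
        rw [this]
        exact hwin (m - n₀) (by omega)
      · have hmt : n₀ ≤ m - t := by omega
        have hrec' := hR (m - t) (le_trans hn₀N hmt)
        rw [Finset.sum_range_succ] at hrec'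
        have hz : ∀ i ∈ Finset.range t, (P i).eval ((m - t : ℕ) : ℂ) * f (m - t + i) = 0 := by
          intro i hi
          have hi' := Finset.mem_range.mp hi
          have : f (m - t + i) = 0 := ih (m - t + i) (by omega) (by omega)
          rw [this, mul_zero]
        rw [Finset.sum_eq_zero hz, zero_add] at hrec'
        have hmeq : m - t + t = m := by omega
        rw [hmeq] at hrec'
        have hPne : (P t).eval ((m - t : ℕ) : ℂ) ≠ 0 := hM (m - t) (by omega)
        exact (mul_eq_zero.mp hrec').resolve_left hPne
  obtain ⟨m, hm1, hm2⟩ := hnz n₀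
  exact hm2 (hzero m hm1)
end

section
/- Let f : ℕ≥1 → ℂ be a multiplicative function that is periodic with period d (f(n+d) = f(n) for all n ≥ 1) and not identically zero. Then (i) f(ab) = f(a)·f(b) for all positive integers a, b with gcd(a,d) = gcd(b,d) = 1 (f is completely multiplicative on integers coprime to d), and (ii) f(n)^{φ(d)} = 1 for every n with gcd(n,d) = 1, where φ is Euler's totient function; in particular each such f(n) is a φ(d)-th root of unity. -/
/-- Let `f : ℕ≥1 → ℂ` be multiplicative, periodic with period `d`, and not
identically zero. Then (i) `f` is completely multiplicative on integers coprime to `d`,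
and (ii) `f(n)^{φ(d)} = 1` for every `n` coprime to `d`. -/
theorem periodic_multiplicative_is_character_like
    (f : ℕ → ℂ) (d : ℕ) (hd : 1 ≤ d)
    (hf1 : f 1 = 1)
    (hfmul : ∀ m n : ℕ, 0 < m → 0 < n → Nat.Coprime m n → f (m * n) = f m * f n)
    (hper : ∀ n : ℕ, 1 ≤ n → f (n + d) = f n)
    (hne : ∃ m : ℕ, 1 ≤ m ∧ f m ≠ 0) :
    (∀ a b : ℕ, 0 < a → 0 < b → Nat.Coprime a d → Nat.Coprime b d →
      f (a * b) = f a * f b) ∧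
    (∀ n : ℕ, 0 < n → Nat.Coprime n d → f n ^ Nat.totient d = 1) := by
  -- periodicity iterated
  have hper' : ∀ n k : ℕ, 1 ≤ n → f (n + d * k) = f n := by
    intro n k hn
    induction k with
    | zero => simp
    | succ k ih =>
      have h : n + d * (k + 1) = (n + d * k) + d := by ring
      rw [h, hper (n + d * k) (by omega), ih]
  -- (i)
  have main : ∀ a b : ℕ, 0 < a → 0 < b → Nat.Coprime a d → Nat.Coprime b d →
      f (a * b) = f a * f b := by
    intro a b ha hb had hbd
    haveI : NeZero a := ⟨ha.ne'⟩
    have hunit : IsUnit ((d : ZMod a)) := (ZMod.isUnit_iff_coprime d a).mpr had.symm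
    set u := ((d : ZMod a)⁻¹ * (1 - (b : ZMod a))).val with hu
    have hb' : ((b + d * u : ℕ) : ZMod a) = 1 := by
      push_cast
      rw [ZMod.natCast_val, ZMod.cast_id, ← mul_assoc, ZMod.mul_inv_of_unit _ hunit,
        one_mul]
      ring
    have hcop : Nat.Coprime (b + d * u) a := by
      have : IsUnit ((b + d * u : ℕ) : ZMod a) := by rw [hb']; exact isUnit_one
      exact (ZMod.isUnit_iff_coprime _ a).mp this
    have hfb : f (b + d * u) = f b := hper' b u hb
    have hfab : f (a * (b + d * u)) = f (a * b) := by
      have h : a * (b + d * u) = a * b + d * (a * u) := by ring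
      rw [h]
      exact hper' (a * b) (a * u) (Nat.one_le_iff_ne_zero.mpr (Nat.mul_ne_zero ha.ne' hb.ne'))
    have hm := hfmul a (b + d * u) ha (by omega) hcop.symm
    rw [hfab, hfb] at hm
    exact hm
  refine ⟨main, ?_⟩
  intro n hn hnd
  -- f (n^k) = f n ^ k
  have hpow : ∀ k : ℕ, f (n ^ k) = f n ^ k := by
    intro k
    induction k with
    | zero => simpa using hf1
    | succ k ih =>
      rw [pow_succ, pow_succ, main (n ^ k) n (by positivity) hn
        (Nat.Coprime.pow_left k hnd) hnd, ih]
  have hmod : n ^ Nat.totient d ≡ 1 [MOD d] := Nat.ModEq.pow_totient hnd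
  have h1 : 1 ≤ n ^ Nat.totient d := Nat.one_le_pow _ _ hn
  have hdvd : d ∣ n ^ Nat.totient d - 1 := (Nat.modEq_iff_dvd' h1).mp hmod.symm
  obtain ⟨s, hs⟩ := hdvd
  have hns : n ^ Nat.totient d = 1 + d * s := by omega
  calc f n ^ Nat.totient d = f (n ^ Nat.totient d) := (hpow _).symm
    _ = f (1 + d * s) := by rw [hns]
    _ = f 1 := hper' 1 s le_rfl
    _ = 1 := hf1
end
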